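/- (Theorem: ratio consistency of the variance estimator of Test 1) Fix d ≥ 2 and constants 0 < c_0 ≤ C_0 < ∞ and δ > 0. For each k ≥ 1, suppose given π_{1r}, π_{2r} ∈ Ξ_d and integer sample sizes n_{1r}, n_{2r} ≥ 4 (1 ≤ r ≤ k), and k independent pairs of mutually independent samples with sample s of population i in group r distributed as P(X^{(ir)}_s = j) = π_{irj}. Assume: (S) there exists a positive integer m = m(k) such that n_{ir} = c_{ir} m with c_0 ≤ c_{ir} ≤ C_0 for i = 1,2 and all r, k; and tr(Σ_{π_{ir}}²) > δ for i = 1,2 and all r, k. Then v̂ar_0(T_U) / var_0(T_U) → 1 in probability as k → ∞. (No null hypothesis is assumed: the result holds under H_0 and under alternatives.) -/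

import Mathlib

open MeasureTheory ProbabilityTheory Filter

noncomputable section

/-- The categorical distribution on `Fin d` with probability weights `π`. -/
def catMeasure {d : ℕ} (π : Fin d → ℝ) : Measure (Fin d) :=
  ∑ j, (ENNReal.ofReal (π j)) • Measure.dirac j

/-- The joint law of an i.i.d. sample of size `n` from the categorical distribution `π`. -/
def iidMeasure {d : ℕ} (n : ℕ) (π : Fin d → ℝ) : Measure (Fin n → Fin d) :=
  Measure.pi fun _ => catMeasure π

/-- Empirical relative frequency of category `j` in the sample `x`. -/
def empFreq {d n : ℕ} (x : Fin n → Fin d) (j : Fin d) : ℝ :=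
  ((Finset.univ.filter fun s => x s = j).card : ℝ) / n

/-- Observed frequency (count) of category `j` in the sample `x`. -/
def cnt {d n : ℕ} (x : Fin n → Fin d) (j : Fin d) : ℝ :=
  ((Finset.univ.filter fun s => x s = j).card : ℝ)

/-- For `π ∈ Ξ_d`, the multinomial covariance matrix `Σ_π = diag(π) − π πᵀ`. -/
def covMatrix {d : ℕ} (π : Fin d → ℝ) : Matrix (Fin d) (Fin d) ℝ :=
  Matrix.diagonal π - Matrix.vecMulVec π π

/-- tr(Σ_π²). -/
def trsq {d : ℕ} (π : Fin d → ℝ) : ℝ :=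
  Matrix.trace (covMatrix π * covMatrix π)

/-- tr(Σ_π Σ_ρ). -/
def trprod {d : ℕ} (π ρ : Fin d → ℝ) : ℝ :=
  Matrix.trace (covMatrix π * covMatrix ρ)

/-- The quadratic form `vᵀ A v`. -/
def qf {d : ℕ} (A : Matrix (Fin d) (Fin d) ℝ) (v : Fin d → ℝ) : ℝ :=
  dotProduct v (A.mulVec v)

/-- `b_r = 2/(n₁(n₁−1)) + 2/(n₂(n₂−1)) + 4/(n₁n₂)`. -/
def bcoef (n₁ n₂ : ℕ) : ℝ :=
  2 / ((n₁ : ℝ) * ((n₁ : ℝ) - 1)) + 2 / ((n₂ : ℝ) * ((n₂ : ℝ) - 1))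
    + 4 / ((n₁ : ℝ) * (n₂ : ℝ))

/-- The unbiased two-sample U-statistic of one group,
`T_{U_r} = (n₁/(n₁−1)) π̂₁ᵀπ̂₁ − 1/(n₁−1) + (n₂/(n₂−1)) π̂₂ᵀπ̂₂ − 1/(n₂−1) − 2 π̂₁ᵀπ̂₂`. -/
def TUstat {d n₁ n₂ : ℕ} (x₁ : Fin n₁ → Fin d) (x₂ : Fin n₂ → Fin d) : ℝ :=
  (n₁ : ℝ) / ((n₁ : ℝ) - 1) * ∑ j, (empFreq x₁ j) ^ 2 - 1 / ((n₁ : ℝ) - 1)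
    + (n₂ : ℝ) / ((n₂ : ℝ) - 1) * ∑ j, (empFreq x₂ j) ^ 2 - 1 / ((n₂ : ℝ) - 1)
    - 2 * ∑ j, empFreq x₁ j * empFreq x₂ j

/-- The joint law of the `k` independent pairs of independent samples, where in group `r`
population `i` has sample size `nᵢ k r` and probability vector `πᵢ k r`. -/
def bigMeasure (d k : ℕ) (n₁ n₂ : ℕ → ℕ → ℕ) (π₁ π₂ : ℕ → ℕ → Fin d → ℝ) :
    Measure ((r : Fin k) → (Fin (n₁ k r) → Fin d) × (Fin (n₂ k r) → Fin d)) :=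
  Measure.pi fun r =>
    (iidMeasure (n₁ k r) (π₁ k r)).prod (iidMeasure (n₂ k r) (π₂ k r))

/-- The test statistic `T_U = k^{−1/2} Σ_r T_{U_r}`. -/
def TU (d k : ℕ) (n₁ n₂ : ℕ → ℕ → ℕ)
    (ω : (r : Fin k) → (Fin (n₁ k r) → Fin d) × (Fin (n₂ k r) → Fin d)) : ℝ :=
  (1 / Real.sqrt k) * ∑ r, TUstat (ω r).1 (ω r).2


/-- The unbiased trace estimator computed from a frequency vector `N` with total `n`:
`(1/2)(n−2)/(n(n−1)(n−3)) Σ_{t≠s} N_t N_s [ (N_t+N_s−2)/(n−2) − ((N_t−N_s)/(n−2))² ]`. -/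
def trEstOfFreq {d : ℕ} (N : Fin d → ℝ) (n : ℝ) : ℝ :=
  (1 / 2) * ((n - 2) / (n * (n - 1) * (n - 3))) *
    ∑ t, ∑ s ∈ Finset.univ.erase t,
      N t * N s * ((N t + N s - 2) / (n - 2) - ((N t - N s) / (n - 2)) ^ 2)

/-- `tr(Σ̂²)`, the unbiased estimator of `tr(Σ_π²)` computed from the sample `x`. -/
def trSigmaHatSq {d n : ℕ} (x : Fin n → Fin d) : ℝ := trEstOfFreq (cnt x) n

/-- `Σ̂ = (n/(n−1)) Σ_{π̂}`, the unbiased estimator of `Σ_π`. -/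
def hatSigma {d n : ℕ} (x : Fin n → Fin d) : Matrix (Fin d) (Fin d) ℝ :=
  ((n : ℝ) / ((n : ℝ) - 1)) • covMatrix (empFreq x)

/-- `σ̂₀ᵣ² = 2/(n₁(n₁−1)) tr(Σ̂₁²) + 2/(n₂(n₂−1)) tr(Σ̂₂²) + 4/(n₁n₂) tr(Σ̂₁Σ̂₂)`. -/
def sigmaHat0Sq {d n₁ n₂ : ℕ} (x₁ : Fin n₁ → Fin d) (x₂ : Fin n₂ → Fin d) : ℝ :=
  2 / ((n₁ : ℝ) * ((n₁ : ℝ) - 1)) * trSigmaHatSq x₁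
    + 2 / ((n₂ : ℝ) * ((n₂ : ℝ) - 1)) * trSigmaHatSq x₂
    + 4 / ((n₁ : ℝ) * (n₂ : ℝ)) * Matrix.trace (hatSigma x₁ * hatSigma x₂)

/-- The Test 1 variance estimator `v̂ar₀(T_U) = (1/k) Σ_r σ̂₀ᵣ²`. -/
def varHat0 (d k : ℕ) (n₁ n₂ : ℕ → ℕ → ℕ)
    (ω : (r : Fin k) → (Fin (n₁ k r) → Fin d) × (Fin (n₂ k r) → Fin d)) : ℝ :=
  (1 / (k : ℝ)) * ∑ r, sigmaHat0Sq (ω r).1 (ω r).2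

/-- The target quantity `var₀(T_U) = (1/k) Σ_r [2/(n₁(n₁−1)) tr(Σ_{π₁r}²)
 + 2/(n₂(n₂−1)) tr(Σ_{π₂r}²) + 4/(n₁n₂) tr(Σ_{π₁r}Σ_{π₂r})]`. -/
def var0gen (d k : ℕ) (n₁ n₂ : ℕ → ℕ → ℕ) (π₁ π₂ : ℕ → ℕ → Fin d → ℝ) : ℝ :=
  (1 / (k : ℝ)) * ∑ r : Fin k,
    (2 / ((n₁ k r : ℝ) * ((n₁ k r : ℝ) - 1)) * trsq (π₁ k r)
      + 2 / ((n₂ k r : ℝ) * ((n₂ k r : ℝ) - 1)) * trsq (π₂ k r)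
      + 4 / ((n₁ k r : ℝ) * (n₂ k r : ℝ)) * trprod (π₁ k r) (π₂ k r))

end

noncomputable section
namespace Stmt14Aux
open Finset

def wgt {d : ℕ} (n : ℕ) (π : Fin d → ℝ) (x : Fin n → Fin d) : ℝ := ∏ u, π (x u)

def Ex {d : ℕ} (n : ℕ) (π : Fin d → ℝ) (f : (Fin n → Fin d) → ℝ) : ℝ :=
  ∑ x : Fin n → Fin d, wgt n π x * f x

def dff (x : ℝ) (a : ℕ) : ℝ := ∏ i ∈ Finset.range a, (x - i)

lemma dff_zero (x : ℝ) : dff x 0 = 1 := by simp [dff]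

lemma dff_succ_arg (x : ℝ) (m : ℕ) : dff (x + 1) m = dff x m + m * dff x (m - 1) := by
  cases m with
  | zero => simp [dff]
  | succ m =>
    have h1 : dff (x+1) (m+1) = dff x m * (x + 1) := by
      rw [dff, Finset.prod_range_succ']
      simp [dff]
    have h2 : dff x (m+1) = dff x m * (x - m) := by
      rw [dff, Finset.prod_range_succ]; rfl
    rw [h1, h2]
    simp only [Nat.add_sub_cancel]
    push_cast
    ring

lemma cnt_eq_sum {d n : ℕ} (x : Fin n → Fin d) (j : Fin d) :
    cnt x j = ∑ u, if x u = j then (1:ℝ) else 0 := by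
  rw [cnt, Finset.card_filter]
  push_cast
  simp

lemma cnt_cons {d n : ℕ} (j : Fin d) (y : Fin n → Fin d) (t : Fin d) :
    cnt (Fin.cons j y) t = (if j = t then (1:ℝ) else 0) + cnt y t := by
  simp only [cnt_eq_sum, Fin.sum_univ_succ, Fin.cons_zero, Fin.cons_succ]

lemma Ex_succ {d : ℕ} (n : ℕ) (π : Fin d → ℝ) (f : (Fin (n+1) → Fin d) → ℝ) :
    Ex (n+1) π f = ∑ j, π j * Ex n π (fun y => f (Fin.cons j y)) := by
  rw [Ex, ← Equiv.sum_comp (Fin.consEquiv (fun _ => Fin d))]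
  rw [Fintype.sum_prod_type]
  simp only [Fin.consEquiv_apply, Ex, Finset.mul_sum]
  refine Finset.sum_congr rfl fun j _ => Finset.sum_congr rfl fun y _ => ?_
  have e : ((Fin.consEquiv fun _ => Fin d) (j, y)) = Fin.cons j y := rfl
  rw [e]
  have h : wgt (n+1) π (Fin.cons j y) = π j * wgt n π y := by
    rw [wgt, Fin.prod_univ_succ]
    simp [wgt]
  rw [h]; ring

lemma Ex_zero {d : ℕ} (π : Fin d → ℝ) (f : (Fin 0 → Fin d) → ℝ) :
    Ex 0 π f = f ![] := by
  rw [Ex]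
  rw [Fintype.sum_eq_single ![]]
  · simp [wgt]
  · intro x hx; exact absurd (Subsingleton.elim x ![]) hx

lemma dff_zero_left {m : ℕ} (hm : m ≠ 0) : dff 0 m = 0 := by
  rw [dff]
  refine Finset.prod_eq_zero (Finset.mem_range.mpr (Nat.pos_of_ne_zero hm)) ?_
  norm_num

lemma Ex_add {d : ℕ} (n : ℕ) (π : Fin d → ℝ) (f g : (Fin n → Fin d) → ℝ) :
    Ex n π (fun x => f x + g x) = Ex n π f + Ex n π g := by
  simp [Ex, mul_add, Finset.sum_add_distrib]

lemma Ex_const_mul {d : ℕ} (n : ℕ) (π : Fin d → ℝ) (c : ℝ) (f : (Fin n → Fin d) → ℝ) :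
    Ex n π (fun x => c * f x) = c * Ex n π f := by
  simp [Ex, Finset.mul_sum]; exact Finset.sum_congr rfl fun x _ => by ring

lemma FM {d : ℕ} (π : Fin d → ℝ) (hπ : ∑ j, π j = 1) :
    ∀ (n : ℕ) (a : Fin d → ℕ),
      Ex n π (fun x => ∏ t, dff (cnt x t) (a t)) =
        dff n (∑ t, a t) * ∏ t, (π t) ^ (a t) := by
  intro n
  induction n with
  | zero =>
    intro a
    rw [Ex_zero]
    have hc : ∀ t, cnt (![] : Fin 0 → Fin d) t = 0 := by intro t; simp [cnt]
    by_cases h : ∀ t, a t = 0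
    · simp [hc, h, dff_zero]
    · push_neg at h
      obtain ⟨t, ht⟩ := h
      have h1 : (∏ t, dff (cnt (![] : Fin 0 → Fin d) t) (a t)) = 0 :=
        Finset.prod_eq_zero (Finset.mem_univ t) (by rw [hc t]; exact dff_zero_left ht)
      have h2 : dff ((0:ℕ):ℝ) (∑ t, a t) = 0 := by
        have : (∑ t, a t) ≠ 0 := by
          intro hs
          exact ht (Finset.sum_eq_zero_iff.mp hs t (Finset.mem_univ t))
        simpa using dff_zero_left this
      rw [h1, h2, zero_mul]
  | succ n ih =>
    intro a
    rw [Ex_succ]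
    have key : ∀ (j : Fin d) (y : Fin n → Fin d),
        (∏ t, dff (cnt (Fin.cons j y) t) (a t)) =
          (∏ t, dff (cnt y t) (a t)) +
            (a j : ℝ) * ∏ t, dff (cnt y t) (Function.update a j (a j - 1) t) := by
      intro j y
      rw [← Finset.mul_prod_erase Finset.univ _ (Finset.mem_univ j),
          ← Finset.mul_prod_erase Finset.univ (fun t => dff (cnt y t) (a t)) (Finset.mem_univ j),
          ← Finset.mul_prod_erase Finset.univ
            (fun t => dff (cnt y t) (Function.update a j (a j - 1) t)) (Finset.mem_univ j)]
      have e1 : ∀ t ∈ Finset.univ.erase j,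
          dff (cnt (Fin.cons j y) t) (a t) = dff (cnt y t) (a t) := by
        intro t htj
        rw [cnt_cons, if_neg (Finset.ne_of_mem_erase htj).symm, zero_add]
      have e2 : ∀ t ∈ Finset.univ.erase j,
          dff (cnt y t) (Function.update a j (a j - 1) t) = dff (cnt y t) (a t) := by
        intro t htj
        rw [Function.update_of_ne (Finset.ne_of_mem_erase htj)]
      rw [Finset.prod_congr rfl e1, Finset.prod_congr rfl e2]
      rw [cnt_cons, if_pos rfl]
      rw [show (1:ℝ) + cnt y j = cnt y j + 1 by ring, dff_succ_arg]
      rw [Function.update_self]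
      ring
    have step : ∀ j : Fin d,
        Ex n π (fun y => ∏ t, dff (cnt (Fin.cons j y) t) (a t)) =
          dff n (∑ t, a t) * (∏ t, (π t) ^ (a t)) +
            (a j : ℝ) * (dff n (∑ t, Function.update a j (a j - 1) t) *
              ∏ t, (π t) ^ (Function.update a j (a j - 1) t)) := by
      intro j
      have : (fun y : Fin n → Fin d => ∏ t, dff (cnt (Fin.cons j y) t) (a t)) =
          (fun y => (∏ t, dff (cnt y t) (a t)) +
            (a j : ℝ) * ∏ t, dff (cnt y t) (Function.update a j (a j - 1) t)) := by
        funext y; exact key j y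
      rw [this, Ex_add, Ex_const_mul, ih, ih]
    rw [Finset.sum_congr rfl (fun j _ => by rw [step j])]
    have hA : ∀ j : Fin d, π j * ((a j : ℝ) *
        (dff n (∑ t, Function.update a j (a j - 1) t) *
          ∏ t, (π t) ^ (Function.update a j (a j - 1) t))) =
        (a j : ℝ) * (dff n ((∑ t, a t) - 1) * ∏ t, (π t) ^ (a t)) := by
      intro j
      rcases Nat.eq_zero_or_pos (a j) with h0 | hpos
      · simp [h0]
      · have hsum : (∑ t, Function.update a j (a j - 1) t) = (∑ t, a t) - 1 := by
          rw [Finset.sum_update_of_mem (Finset.mem_univ j)]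
          have h2 := Finset.add_sum_erase Finset.univ a (Finset.mem_univ j)
          rw [Finset.erase_eq] at h2
          omega
        have hprod : π j * ∏ t, (π t) ^ (Function.update a j (a j - 1) t) =
            ∏ t, (π t) ^ (a t) := by
          rw [← Finset.mul_prod_erase Finset.univ
              (fun t => (π t) ^ (Function.update a j (a j - 1) t)) (Finset.mem_univ j),
              ← Finset.mul_prod_erase Finset.univ (fun t => (π t) ^ (a t)) (Finset.mem_univ j)]
          have e2 : ∀ t ∈ Finset.univ.erase j,
              (π t) ^ (Function.update a j (a j - 1) t) = (π t) ^ (a t) := by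
            intro t htj
            rw [Function.update_of_ne (Finset.ne_of_mem_erase htj)]
          rw [Finset.prod_congr rfl e2, Function.update_self, ← mul_assoc,
            ← pow_succ']
          congr 2
          omega
        rw [hsum, ← hprod]
        ring
    rw [Finset.sum_congr rfl (fun j _ => by rw [mul_add, hA j])]
    rw [Finset.sum_add_distrib, ← Finset.sum_mul, ← Finset.sum_mul, hπ]
    rw [← Nat.cast_sum]
    have : ((n+1 : ℕ) : ℝ) = (n : ℝ) + 1 := by push_cast; ring
    rw [this, dff_succ_arg]
    push_cast
    ring

lemma prod_single_support {d : ℕ} {M : Type*} [CommMonoid M] (t : Fin d) (f : Fin d → M)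
    (h1 : ∀ u, u ≠ t → f u = 1) : ∏ u, f u = f t := by
  rw [← Finset.prod_subset (Finset.subset_univ {t}) (fun u _ hu => h1 u (by simpa using hu))]
  simp

lemma prod_pair_support {d : ℕ} {M : Type*} [CommMonoid M] {t s : Fin d} (hts : t ≠ s)
    (f : Fin d → M) (h1 : ∀ u, u ≠ t → u ≠ s → f u = 1) : ∏ u, f u = f t * f s := by
  rw [← Finset.prod_subset (Finset.subset_univ {t, s})
    (fun u _ hu => by
      simp only [Finset.mem_insert, Finset.mem_singleton] at hu
      push_neg at hu
      exact h1 u hu.1 hu.2)]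
  exact Finset.prod_pair hts

lemma FM1 {d n : ℕ} (π : Fin d → ℝ) (hπ : ∑ j, π j = 1) (t : Fin d) (p : ℕ) :
    Ex n π (fun x => dff (cnt x t) p) = dff n p * π t ^ p := by
  have := FM π hπ n (fun u => if u = t then p else 0)
  have e1 : ∀ x : Fin n → Fin d,
      (∏ u, dff (cnt x u) (if u = t then p else 0)) = dff (cnt x t) p := by
    intro x
    rw [prod_single_support t _ (fun u hu => by rw [if_neg hu, dff_zero])]
    rw [if_pos rfl]
  have e2 : (∑ u, if u = t then p else 0) = p := by
    rw [Finset.sum_ite_eq' Finset.univ t (fun _ => p)]; simp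
  have e3 : (∏ u, π u ^ (if u = t then p else 0)) = π t ^ p := by
    rw [prod_single_support t _ (fun u hu => by rw [if_neg hu, pow_zero])]
    rw [if_pos rfl]
  rw [show (fun x : Fin n → Fin d => dff (cnt x t) p)
      = fun x => ∏ u, dff (cnt x u) (if u = t then p else 0) from funext fun x => (e1 x).symm,
    this, e2, e3]

lemma FM2 {d n : ℕ} (π : Fin d → ℝ) (hπ : ∑ j, π j = 1) {t s : Fin d} (hts : t ≠ s)
    (p q : ℕ) :
    Ex n π (fun x => dff (cnt x t) p * dff (cnt x s) q) =
      dff n (p + q) * (π t ^ p * π s ^ q) := by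
  classical
  set a : Fin d → ℕ := fun u => if u = t then p else if u = s then q else 0 with ha
  have := FM π hπ n a
  have e1 : ∀ x : Fin n → Fin d,
      (∏ u, dff (cnt x u) (a u)) = dff (cnt x t) p * dff (cnt x s) q := by
    intro x
    rw [prod_pair_support hts _ (fun u hut hus => by
      simp only [ha, if_neg hut, if_neg hus, dff_zero])]
    simp only [ha, if_pos rfl, if_neg hts.symm]
    simp
  have e2 : (∑ u, a u) = p + q := by
    rw [← Finset.sum_subset (Finset.subset_univ {t, s})
      (fun u _ hu => by
        simp only [Finset.mem_insert, Finset.mem_singleton] at hu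
        push_neg at hu
        simp only [ha, if_neg hu.1, if_neg hu.2])]
    rw [Finset.sum_pair hts]
    simp only [ha, if_pos rfl, if_neg hts.symm]
    simp
  have e3 : (∏ u, π u ^ (a u)) = π t ^ p * π s ^ q := by
    rw [prod_pair_support hts _ (fun u hut hus => by
      simp only [ha, if_neg hut, if_neg hus, pow_zero])]
    simp only [ha, if_pos rfl, if_neg hts.symm]
    simp
  rw [show (fun x : Fin n → Fin d => dff (cnt x t) p * dff (cnt x s) q)
      = fun x => ∏ u, dff (cnt x u) (a u) from funext fun x => (e1 x).symm,
    this, e2, e3]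

lemma Ex_sum {d n : ℕ} (π : Fin d → ℝ) {ι : Type*} (F : Finset ι)
    (h : ι → (Fin n → Fin d) → ℝ) :
    Ex n π (fun x => ∑ i ∈ F, h i x) = ∑ i ∈ F, Ex n π (h i) := by
  simp only [Ex, Finset.mul_sum]
  rw [Finset.sum_comm]

lemma dff_one (x : ℝ) : dff x 1 = x := by simp [dff]

lemma dff_two (x : ℝ) : dff x 2 = x * (x - 1) := by
  simp [dff, Finset.prod_range_succ]

lemma dff_three (x : ℝ) : dff x 3 = x * (x - 1) * (x - 2) := by
  simp [dff, Finset.prod_range_succ]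

lemma dff_four (x : ℝ) : dff x 4 = x * (x - 1) * (x - 2) * (x - 3) := by
  simp [dff, Finset.prod_range_succ]

lemma Ex_sub {d n : ℕ} (π : Fin d → ℝ) (f g : (Fin n → Fin d) → ℝ) :
    Ex n π (fun x => f x - g x) = Ex n π f - Ex n π g := by
  simp [Ex, mul_sub, Finset.sum_sub_distrib]

lemma bracket_decomp (c2 : ℝ) (hc2 : c2 ≠ 0) (N M : ℝ) :
    N * M * ((N + M - 2) / c2 - ((N - M) / c2) ^ 2) =
      (1 / c2) * (dff N 2 * dff M 1 + dff N 1 * dff M 2)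
        - (1 / c2 ^ 2) * (dff N 3 * dff M 1 + dff N 1 * dff M 3 - 2 * (dff N 2 * dff M 2)
            + dff N 2 * dff M 1 + dff N 1 * dff M 2) := by
  simp only [dff_one, dff_two, dff_three]
  field_simp
  ring

lemma Ex_bracket {d n : ℕ} (π : Fin d → ℝ) (hπ : ∑ j, π j = 1) {t s : Fin d} (hts : t ≠ s)
    (hn : 4 ≤ n) :
    Ex n π (fun x => cnt x t * cnt x s *
        ((cnt x t + cnt x s - 2) / ((n : ℝ) - 2) - ((cnt x t - cnt x s) / ((n : ℝ) - 2)) ^ 2)) =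
      (1 / ((n : ℝ) - 2)) * (dff n 3 * (π t ^ 2 * π s ^ 1) + dff n 3 * (π t ^ 1 * π s ^ 2))
        - (1 / ((n : ℝ) - 2) ^ 2) * (dff n 4 * (π t ^ 3 * π s ^ 1) + dff n 4 * (π t ^ 1 * π s ^ 3)
            - 2 * (dff n 4 * (π t ^ 2 * π s ^ 2))
            + dff n 3 * (π t ^ 2 * π s ^ 1) + dff n 3 * (π t ^ 1 * π s ^ 2)) := by
  have hc2 : ((n : ℝ) - 2) ≠ 0 := by
    have : (4 : ℝ) ≤ (n : ℝ) := by exact_mod_cast hn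
    linarith
  have hfun : (fun x : Fin n → Fin d => cnt x t * cnt x s *
        ((cnt x t + cnt x s - 2) / ((n : ℝ) - 2) - ((cnt x t - cnt x s) / ((n : ℝ) - 2)) ^ 2)) =
      fun x => (1 / ((n : ℝ) - 2)) * ((dff (cnt x t) 2 * dff (cnt x s) 1)
          + (dff (cnt x t) 1 * dff (cnt x s) 2))
        - (1 / ((n : ℝ) - 2) ^ 2) * ((dff (cnt x t) 3 * dff (cnt x s) 1)
            + (dff (cnt x t) 1 * dff (cnt x s) 3) - 2 * (dff (cnt x t) 2 * dff (cnt x s) 2)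
            + (dff (cnt x t) 2 * dff (cnt x s) 1) + (dff (cnt x t) 1 * dff (cnt x s) 2)) :=
    funext fun x => bracket_decomp _ hc2 _ _
  rw [hfun, Ex_sub, Ex_const_mul, Ex_const_mul]
  rw [show (fun x : Fin n → Fin d => dff (cnt x t) 2 * dff (cnt x s) 1
      + dff (cnt x t) 1 * dff (cnt x s) 2)
    = fun x => (dff (cnt x t) 2 * dff (cnt x s) 1) + (dff (cnt x t) 1 * dff (cnt x s) 2) from rfl,
    Ex_add]
  rw [show (fun x : Fin n → Fin d => dff (cnt x t) 3 * dff (cnt x s) 1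
      + dff (cnt x t) 1 * dff (cnt x s) 3 - 2 * (dff (cnt x t) 2 * dff (cnt x s) 2)
      + dff (cnt x t) 2 * dff (cnt x s) 1 + dff (cnt x t) 1 * dff (cnt x s) 2)
    = fun x => ((((dff (cnt x t) 3 * dff (cnt x s) 1) + (dff (cnt x t) 1 * dff (cnt x s) 3))
        - (2 * (dff (cnt x t) 2 * dff (cnt x s) 2)))
        + (dff (cnt x t) 2 * dff (cnt x s) 1)) + (dff (cnt x t) 1 * dff (cnt x s) 2) from rfl]
  rw [Ex_add, Ex_add, Ex_sub, Ex_add, Ex_const_mul]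
  rw [FM2 π hπ hts 2 1, FM2 π hπ hts 1 2, FM2 π hπ hts 3 1, FM2 π hπ hts 1 3,
    FM2 π hπ hts 2 2]

lemma perpair_scalar {n : ℕ} (hn : 4 ≤ n) (a b : ℝ) :
    (1 / 2) * (((n : ℝ) - 2) / ((n : ℝ) * ((n : ℝ) - 1) * ((n : ℝ) - 3))) *
      ((1 / ((n : ℝ) - 2)) * (dff n 3 * (a ^ 2 * b ^ 1) + dff n 3 * (a ^ 1 * b ^ 2))
        - (1 / ((n : ℝ) - 2) ^ 2) * (dff n 4 * (a ^ 3 * b ^ 1) + dff n 4 * (a ^ 1 * b ^ 3)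
            - 2 * (dff n 4 * (a ^ 2 * b ^ 2))
            + dff n 3 * (a ^ 2 * b ^ 1) + dff n 3 * (a ^ 1 * b ^ 2))) =
      (a ^ 2 * b + a * b ^ 2 - a * b * (a - b) ^ 2) / 2 := by
  have h4 : (4 : ℝ) ≤ (n : ℝ) := by exact_mod_cast hn
  have h0 : (n : ℝ) ≠ 0 := by linarith
  have h1 : (n : ℝ) - 1 ≠ 0 := by linarith
  have h2 : (n : ℝ) - 2 ≠ 0 := by linarith
  have h3 : (n : ℝ) - 3 ≠ 0 := by linarith
  rw [dff_three, dff_four]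
  field_simp
  ring

lemma sum_poly3 {d : ℕ} (π : Fin d → ℝ) (c1 c2 c3 : ℝ) :
    ∑ s, (c1 * π s + c2 * π s ^ 2 + c3 * π s ^ 3) =
      c1 * (∑ s, π s) + c2 * (∑ s, π s ^ 2) + c3 * (∑ s, π s ^ 3) := by
  simp [Finset.sum_add_distrib, Finset.mul_sum]

lemma offdiag_sum {d : ℕ} (π : Fin d → ℝ) (hπ : ∑ j, π j = 1) :
    ∑ t, ∑ s ∈ Finset.univ.erase t,
        (π t ^ 2 * π s + π t * π s ^ 2 - π t * π s * (π t - π s) ^ 2) / 2 =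
      (∑ j, π j ^ 2) - 2 * (∑ j, π j ^ 3) + (∑ j, π j ^ 2) ^ 2 := by
  set S2 := ∑ j, π j ^ 2 with hS2
  set S3 := ∑ j, π j ^ 3 with hS3
  have inner : ∀ t : Fin d, ∑ s ∈ Finset.univ.erase t,
      (π t ^ 2 * π s + π t * π s ^ 2 - π t * π s * (π t - π s) ^ 2) / 2 =
      ((π t ^ 2 - π t ^ 3) / 2) * 1 + ((π t + 2 * π t ^ 2) / 2) * S2 + (-(π t / 2)) * S3
        - π t ^ 3 := by
    intro t
    rw [Finset.sum_erase_eq_sub (Finset.mem_univ t)]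
    have e : ∀ s, (π t ^ 2 * π s + π t * π s ^ 2 - π t * π s * (π t - π s) ^ 2) / 2 =
        ((π t ^ 2 - π t ^ 3) / 2) * π s + ((π t + 2 * π t ^ 2) / 2) * π s ^ 2
          + (-(π t / 2)) * π s ^ 3 := fun s => by ring
    rw [Finset.sum_congr rfl (fun s _ => e s), sum_poly3, hπ]
    ring
  rw [Finset.sum_congr rfl (fun t _ => inner t)]
  have e2 : ∀ t : Fin d, ((π t ^ 2 - π t ^ 3) / 2) * 1 + ((π t + 2 * π t ^ 2) / 2) * S2
      + (-(π t / 2)) * S3 - π t ^ 3 =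
      (S2 / 2 - S3 / 2) * π t + (1 / 2 + S2 - 0) * π t ^ 2 + (-(3 / 2)) * π t ^ 3 := by
    intro t; ring
  rw [Finset.sum_congr rfl (fun t _ => e2 t), sum_poly3, hπ, ← hS2, ← hS3]
  ring

lemma trsq_eq {d : ℕ} (π : Fin d → ℝ) :
    trsq π = (∑ j, π j ^ 2) - 2 * (∑ j, π j ^ 3) + (∑ j, π j ^ 2) ^ 2 := by
  rw [trsq, Matrix.trace]
  have hdiag : ∀ i : Fin d, (covMatrix π * covMatrix π) i i =
      (π i - π i ^ 2) ^ 2 + π i ^ 2 * ((∑ j, π j ^ 2) - π i ^ 2) := by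
    intro i
    rw [Matrix.mul_apply]
    have hentry : ∀ i' j : Fin d, covMatrix π i' j =
        (if i' = j then π i' else 0) - π i' * π j := by
      intro i' j
      simp [covMatrix, Matrix.sub_apply, Matrix.diagonal_apply, Matrix.vecMulVec_apply]
    rw [← Finset.add_sum_erase Finset.univ _ (Finset.mem_univ i)]
    have e1 : covMatrix π i i * covMatrix π i i = (π i - π i ^ 2) ^ 2 := by
      rw [hentry i i]; simp; ring
    have e2 : ∀ j ∈ Finset.univ.erase i,
        covMatrix π i j * covMatrix π j i = π i ^ 2 * π j ^ 2 := by
      intro j hj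
      have hij : i ≠ j := (Finset.ne_of_mem_erase hj).symm
      rw [hentry i j, hentry j i, if_neg hij, if_neg hij.symm]
      ring
    rw [e1, Finset.sum_congr rfl e2]
    have e3 : ∑ j ∈ Finset.univ.erase i, π i ^ 2 * π j ^ 2 =
        π i ^ 2 * ((∑ j, π j ^ 2) - π i ^ 2) := by
      rw [← Finset.mul_sum, Finset.sum_erase_eq_sub (Finset.mem_univ i)]
    rw [e3]
  rw [show (covMatrix π * covMatrix π).diag = fun i => (covMatrix π * covMatrix π) i i from rfl]
  rw [Finset.sum_congr rfl (fun i _ => hdiag i)]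
  have e4 : ∀ i : Fin d, (π i - π i ^ 2) ^ 2 + π i ^ 2 * ((∑ j, π j ^ 2) - π i ^ 2) =
      0 * π i + (1 + (∑ j, π j ^ 2)) * π i ^ 2 + (-2) * π i ^ 3 := fun i => by ring
  rw [Finset.sum_congr rfl (fun i _ => e4 i), sum_poly3]
  ring

lemma matrix_diag : True := trivial

lemma mean_trEst {d n : ℕ} (hn : 4 ≤ n) (π : Fin d → ℝ) (hπ : ∑ j, π j = 1) :
    Ex n π (fun x => trEstOfFreq (cnt x) (n : ℝ)) = trsq π := by
  have hfun : (fun x : Fin n → Fin d => trEstOfFreq (cnt x) (n : ℝ)) =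
      fun x => (1 / 2) * (((n : ℝ) - 2) / ((n : ℝ) * ((n : ℝ) - 1) * ((n : ℝ) - 3))) *
        ∑ t, ∑ s ∈ Finset.univ.erase t, cnt x t * cnt x s *
          ((cnt x t + cnt x s - 2) / ((n : ℝ) - 2)
            - ((cnt x t - cnt x s) / ((n : ℝ) - 2)) ^ 2) := rfl
  rw [hfun, Ex_const_mul, Ex_sum]
  have h1 : ∀ t : Fin d, Ex n π (fun x => ∑ s ∈ Finset.univ.erase t, cnt x t * cnt x s *
      ((cnt x t + cnt x s - 2) / ((n : ℝ) - 2) - ((cnt x t - cnt x s) / ((n : ℝ) - 2)) ^ 2)) =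
      ∑ s ∈ Finset.univ.erase t, Ex n π (fun x => cnt x t * cnt x s *
        ((cnt x t + cnt x s - 2) / ((n : ℝ) - 2)
          - ((cnt x t - cnt x s) / ((n : ℝ) - 2)) ^ 2)) := fun t => Ex_sum _ _ _
  rw [Finset.sum_congr rfl (fun t _ => h1 t)]
  have h2 : ∀ t : Fin d, ∀ s ∈ Finset.univ.erase t,
      Ex n π (fun x => cnt x t * cnt x s * ((cnt x t + cnt x s - 2) / ((n : ℝ) - 2)
        - ((cnt x t - cnt x s) / ((n : ℝ) - 2)) ^ 2)) =
      (1 / ((n : ℝ) - 2)) * (dff n 3 * (π t ^ 2 * π s ^ 1) + dff n 3 * (π t ^ 1 * π s ^ 2))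
        - (1 / ((n : ℝ) - 2) ^ 2) * (dff n 4 * (π t ^ 3 * π s ^ 1)
            + dff n 4 * (π t ^ 1 * π s ^ 3) - 2 * (dff n 4 * (π t ^ 2 * π s ^ 2))
            + dff n 3 * (π t ^ 2 * π s ^ 1) + dff n 3 * (π t ^ 1 * π s ^ 2)) := by
    intro t s hs
    exact Ex_bracket π hπ (Finset.ne_of_mem_erase hs).symm hn
  rw [Finset.sum_congr rfl (fun t _ => Finset.sum_congr rfl (h2 t))]
  rw [Finset.mul_sum]
  rw [Finset.sum_congr rfl (fun t _ => Finset.mul_sum _ _ _)]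
  rw [Finset.sum_congr rfl (fun t _ => Finset.sum_congr rfl
    (fun s _ => perpair_scalar hn (π t) (π s)))]
  rw [Finset.sum_congr rfl (fun t _ => Finset.sum_congr rfl (fun s _ => by
    rw [show (π t ^ 2 * π s + π t * π s ^ 2 - π t * π s * (π t - π s) ^ 2) / 2
      = (π t ^ 2 * π s + π t * π s ^ 2 - π t * π s * (π t - π s) ^ 2) / 2 from rfl]))]
  rw [offdiag_sum π hπ, trsq_eq π]

lemma mean_cnt {d n : ℕ} (π : Fin d → ℝ) (hπ : ∑ j, π j = 1) (t : Fin d) :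
    Ex n π (fun x => cnt x t) = n * π t := by
  have h := FM1 (n := n) π hπ t 1
  simpa [dff_one] using h

lemma mean_cnt_sq {d n : ℕ} (π : Fin d → ℝ) (hπ : ∑ j, π j = 1) (t : Fin d) :
    Ex n π (fun x => cnt x t * cnt x t) =
      (n : ℝ) * ((n : ℝ) - 1) * (π t ^ 2) + n * π t := by
  have hfun : (fun x : Fin n → Fin d => cnt x t * cnt x t) =
      fun x => dff (cnt x t) 2 + cnt x t := by
    funext x; rw [dff_two]; ring
  rw [hfun, Ex_add, FM1 π hπ t 2, mean_cnt π hπ t, dff_two]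

lemma mean_cnt_mul {d n : ℕ} (π : Fin d → ℝ) (hπ : ∑ j, π j = 1) {t s : Fin d} (hts : t ≠ s) :
    Ex n π (fun x => cnt x t * cnt x s) = (n : ℝ) * ((n : ℝ) - 1) * (π t * π s) := by
  have h := FM2 (n := n) π hπ hts 1 1
  simpa [dff_one, dff_two] using h

lemma empFreq_eq {d n : ℕ} (x : Fin n → Fin d) (j : Fin d) :
    empFreq x j = cnt x j / n := rfl

lemma mean_hatSigma {d n : ℕ} (hn : 4 ≤ n) (π : Fin d → ℝ) (hπ : ∑ j, π j = 1)
    (t s : Fin d) :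
    Ex n π (fun x => hatSigma x t s) = covMatrix π t s := by
  have h4 : (4 : ℝ) ≤ (n : ℝ) := by exact_mod_cast hn
  have h0 : (n : ℝ) ≠ 0 := by linarith
  have h1 : (n : ℝ) - 1 ≠ 0 := by linarith
  have hcov : ∀ (ρ : Fin d → ℝ), covMatrix ρ t s = (if t = s then ρ t else 0) - ρ t * ρ s := by
    intro ρ
    simp [covMatrix, Matrix.sub_apply, Matrix.diagonal_apply, Matrix.vecMulVec_apply]
  by_cases hts : t = s
  · subst hts
    have hfun : (fun x : Fin n → Fin d => hatSigma x t t) =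
        fun x => (1 / ((n : ℝ) - 1)) * cnt x t
          + (-(1 / ((n : ℝ) * ((n : ℝ) - 1)))) * (cnt x t * cnt x t) := by
      funext x
      rw [hatSigma, Matrix.smul_apply, hcov, if_pos rfl, empFreq_eq, smul_eq_mul]
      field_simp
      ring
    rw [hfun, Ex_add, Ex_const_mul, Ex_const_mul, mean_cnt π hπ t, mean_cnt_sq π hπ t,
      hcov, if_pos rfl]
    field_simp
    ring
  · have hfun : (fun x : Fin n → Fin d => hatSigma x t s) =
        fun x => (-(1 / ((n : ℝ) * ((n : ℝ) - 1)))) * (cnt x t * cnt x s) := by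
      funext x
      rw [hatSigma, Matrix.smul_apply, hcov, if_neg hts, empFreq_eq, empFreq_eq, smul_eq_mul]
      field_simp
      ring
    rw [hfun, Ex_const_mul, mean_cnt_mul π hπ hts, hcov, if_neg hts]
    field_simp
    ring

lemma Ex_one {d n : ℕ} (π : Fin d → ℝ) (hπ : ∑ j, π j = 1) :
    Ex n π (fun _ => (1 : ℝ)) = 1 := by
  have h := FM π hπ n (fun _ => 0)
  simpa [dff_zero] using h

def Exx {d : ℕ} (n₁ n₂ : ℕ) (π₁ π₂ : Fin d → ℝ)
    (f : (Fin n₁ → Fin d) → (Fin n₂ → Fin d) → ℝ) : ℝ :=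
  ∑ x₁ : Fin n₁ → Fin d, ∑ x₂ : Fin n₂ → Fin d,
    (wgt n₁ π₁ x₁ * wgt n₂ π₂ x₂) * f x₁ x₂

lemma Exx_mul {d : ℕ} (n₁ n₂ : ℕ) (π₁ π₂ : Fin d → ℝ)
    (f : (Fin n₁ → Fin d) → ℝ) (g : (Fin n₂ → Fin d) → ℝ) :
    Exx n₁ n₂ π₁ π₂ (fun x₁ x₂ => f x₁ * g x₂) = Ex n₁ π₁ f * Ex n₂ π₂ g := by
  rw [Ex, Ex, Finset.sum_mul_sum]
  exact Finset.sum_congr rfl fun x₁ _ => Finset.sum_congr rfl fun x₂ _ => by ring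

lemma Exx_left {d : ℕ} (n₁ n₂ : ℕ) (π₁ π₂ : Fin d → ℝ) (hπ₂ : ∑ j, π₂ j = 1)
    (f : (Fin n₁ → Fin d) → ℝ) :
    Exx n₁ n₂ π₁ π₂ (fun x₁ _ => f x₁) = Ex n₁ π₁ f := by
  have h : (fun (x₁ : Fin n₁ → Fin d) (_ : Fin n₂ → Fin d) => f x₁) =
      fun x₁ x₂ => f x₁ * (fun _ : Fin n₂ → Fin d => (1:ℝ)) x₂ := by
    funext x₁ x₂; simp
  rw [h, Exx_mul, Ex_one π₂ hπ₂, mul_one]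

lemma Exx_right {d : ℕ} (n₁ n₂ : ℕ) (π₁ π₂ : Fin d → ℝ) (hπ₁ : ∑ j, π₁ j = 1)
    (g : (Fin n₂ → Fin d) → ℝ) :
    Exx n₁ n₂ π₁ π₂ (fun _ x₂ => g x₂) = Ex n₂ π₂ g := by
  have h : (fun (_ : Fin n₁ → Fin d) (x₂ : Fin n₂ → Fin d) => g x₂) =
      fun x₁ x₂ => (fun _ : Fin n₁ → Fin d => (1:ℝ)) x₁ * g x₂ := by
    funext x₁ x₂; simp
  rw [h, Exx_mul, Ex_one π₁ hπ₁, one_mul]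

lemma Exx_add {d : ℕ} (n₁ n₂ : ℕ) (π₁ π₂ : Fin d → ℝ)
    (f g : (Fin n₁ → Fin d) → (Fin n₂ → Fin d) → ℝ) :
    Exx n₁ n₂ π₁ π₂ (fun x₁ x₂ => f x₁ x₂ + g x₁ x₂)
      = Exx n₁ n₂ π₁ π₂ f + Exx n₁ n₂ π₁ π₂ g := by
  simp [Exx, mul_add, Finset.sum_add_distrib]

lemma Exx_const_mul {d : ℕ} (n₁ n₂ : ℕ) (π₁ π₂ : Fin d → ℝ) (c : ℝ)
    (f : (Fin n₁ → Fin d) → (Fin n₂ → Fin d) → ℝ) :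
    Exx n₁ n₂ π₁ π₂ (fun x₁ x₂ => c * f x₁ x₂) = c * Exx n₁ n₂ π₁ π₂ f := by
  simp only [Exx, Finset.mul_sum]
  exact Finset.sum_congr rfl fun x₁ _ => Finset.sum_congr rfl fun x₂ _ => by ring

lemma Exx_sum {d : ℕ} (n₁ n₂ : ℕ) (π₁ π₂ : Fin d → ℝ) {ι : Type*} (F : Finset ι)
    (h : ι → (Fin n₁ → Fin d) → (Fin n₂ → Fin d) → ℝ) :
    Exx n₁ n₂ π₁ π₂ (fun x₁ x₂ => ∑ i ∈ F, h i x₁ x₂)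
      = ∑ i ∈ F, Exx n₁ n₂ π₁ π₂ (h i) := by
  simp only [Exx, Finset.mul_sum]
  rw [Finset.sum_congr rfl (fun x₁ _ => Finset.sum_comm)]
  rw [Finset.sum_comm]

lemma mean_sigmaHat0Sq {d n₁ n₂ : ℕ} (h₁ : 4 ≤ n₁) (h₂ : 4 ≤ n₂)
    (π₁ π₂ : Fin d → ℝ) (hπ₁ : ∑ j, π₁ j = 1) (hπ₂ : ∑ j, π₂ j = 1) :
    Exx n₁ n₂ π₁ π₂ (fun x₁ x₂ => sigmaHat0Sq x₁ x₂) =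
      2 / ((n₁ : ℝ) * ((n₁ : ℝ) - 1)) * trsq π₁
        + 2 / ((n₂ : ℝ) * ((n₂ : ℝ) - 1)) * trsq π₂
        + 4 / ((n₁ : ℝ) * (n₂ : ℝ)) * trprod π₁ π₂ := by
  have hfun : (fun (x₁ : Fin n₁ → Fin d) (x₂ : Fin n₂ → Fin d) => sigmaHat0Sq x₁ x₂) =
      fun x₁ x₂ =>
        ((2 / ((n₁ : ℝ) * ((n₁ : ℝ) - 1)) * trSigmaHatSq x₁
          + 2 / ((n₂ : ℝ) * ((n₂ : ℝ) - 1)) * trSigmaHatSq x₂)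
          + 4 / ((n₁ : ℝ) * (n₂ : ℝ)) * ∑ t, ∑ u, hatSigma x₁ t u * hatSigma x₂ u t) := by
    funext x₁ x₂
    rw [sigmaHat0Sq]
    simp [Matrix.trace, Matrix.diag, Matrix.mul_apply]
  rw [hfun, Exx_add, Exx_add, Exx_const_mul, Exx_const_mul, Exx_const_mul]
  rw [Exx_left n₁ n₂ π₁ π₂ hπ₂, Exx_right n₁ n₂ π₁ π₂ hπ₁]
  have e1 : Ex n₁ π₁ trSigmaHatSq = trsq π₁ := mean_trEst h₁ π₁ hπ₁
  have e2 : Ex n₂ π₂ trSigmaHatSq = trsq π₂ := mean_trEst h₂ π₂ hπ₂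
  rw [e1, e2]
  have htr : Exx n₁ n₂ π₁ π₂ (fun x₁ x₂ => ∑ t, ∑ u, hatSigma x₁ t u * hatSigma x₂ u t)
      = trprod π₁ π₂ := by
    rw [Exx_sum]
    rw [Finset.sum_congr rfl (fun t _ => Exx_sum n₁ n₂ π₁ π₂ Finset.univ
      (fun u x₁ x₂ => hatSigma x₁ t u * hatSigma x₂ u t))]
    rw [Finset.sum_congr rfl (fun t _ => Finset.sum_congr rfl (fun u _ =>
      Exx_mul n₁ n₂ π₁ π₂ (fun x₁ => hatSigma x₁ t u) (fun x₂ => hatSigma x₂ u t)))]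
    rw [Finset.sum_congr rfl (fun t _ => Finset.sum_congr rfl (fun u _ => by
      rw [mean_hatSigma h₁ π₁ hπ₁ t u, mean_hatSigma h₂ π₂ hπ₂ u t]))]
    rw [trprod]
    simp [Matrix.trace, Matrix.diag, Matrix.mul_apply]
  rw [htr]

lemma cnt_nonneg {d n : ℕ} (x : Fin n → Fin d) (t : Fin d) : 0 ≤ cnt x t := by
  rw [cnt]; positivity

lemma cnt_le {d n : ℕ} (x : Fin n → Fin d) (t : Fin d) : cnt x t ≤ n := by
  rw [cnt]
  exact_mod_cast Nat.cast_le.mpr (le_trans (Finset.card_filter_le _ _)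
    (le_of_eq (Finset.card_univ.trans (Fintype.card_fin n))))

lemma cnt_add_le {d n : ℕ} (x : Fin n → Fin d) {t s : Fin d} (hts : t ≠ s) :
    cnt x t + cnt x s ≤ n := by
  rw [cnt, cnt]
  have hdisj : Disjoint (Finset.univ.filter fun u => x u = t)
      (Finset.univ.filter fun u => x u = s) := by
    rw [Finset.disjoint_left]
    intro u hu1 hu2
    simp only [Finset.mem_filter] at hu1 hu2
    exact hts (hu1.2 ▸ hu2.2 ▸ rfl)
  have := Finset.card_union_of_disjoint hdisj
  have hle : ((Finset.univ.filter fun u => x u = t) ∪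
      (Finset.univ.filter fun u => x u = s)).card ≤ n := by
    refine le_trans (Finset.card_le_card (Finset.subset_univ _)) ?_
    simp
  push_cast
  exact_mod_cast (by omega :
    (Finset.univ.filter fun u => x u = t).card + (Finset.univ.filter fun u => x u = s).card ≤ n)

lemma abs_trEst_le {d n : ℕ} (hn : 4 ≤ n) (x : Fin n → Fin d) :
    |trSigmaHatSq x| ≤ 10 * (d : ℝ) ^ 2 := by
  have h4 : (4 : ℝ) ≤ (n : ℝ) := by exact_mod_cast hn
  have hn0 : (0:ℝ) < n := by linarith
  have hn1 : (0:ℝ) < (n:ℝ) - 1 := by linarith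
  have hn2 : (0:ℝ) < (n:ℝ) - 2 := by linarith
  have hn3 : (0:ℝ) < (n:ℝ) - 3 := by linarith
  have hterm : ∀ t : Fin d, ∀ s ∈ Finset.univ.erase t,
      |cnt x t * cnt x s * ((cnt x t + cnt x s - 2) / ((n : ℝ) - 2)
        - ((cnt x t - cnt x s) / ((n : ℝ) - 2)) ^ 2)| ≤ 5 * (n : ℝ) ^ 2 := by
    intro t s hs
    have hts : t ≠ s := (Finset.ne_of_mem_erase hs).symm
    have h1 : |cnt x t * cnt x s| ≤ (n : ℝ) ^ 2 := by
      rw [abs_mul, abs_of_nonneg (cnt_nonneg x t), abs_of_nonneg (cnt_nonneg x s)]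
      have := cnt_le x t; have := cnt_le x s
      have := cnt_nonneg x t; have := cnt_nonneg x s
      nlinarith
    have hsum := cnt_add_le x hts
    have hb1 : |(cnt x t + cnt x s - 2) / ((n : ℝ) - 2)| ≤ 1 := by
      rw [abs_div, abs_of_pos hn2, div_le_one hn2, abs_le]
      constructor
      · have := cnt_nonneg x t; have := cnt_nonneg x s; linarith
      · linarith
    have hb2 : |((cnt x t - cnt x s) / ((n : ℝ) - 2)) ^ 2| ≤ 4 := by
      rw [abs_pow]
      have : |(cnt x t - cnt x s) / ((n : ℝ) - 2)| ≤ 2 := by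
        rw [abs_div, abs_of_pos hn2, div_le_iff₀ hn2, abs_le]
        have := cnt_nonneg x t; have := cnt_nonneg x s
        have := cnt_le x t; have := cnt_le x s
        constructor <;> linarith
      nlinarith [abs_nonneg ((cnt x t - cnt x s) / ((n : ℝ) - 2))]
    calc |cnt x t * cnt x s * ((cnt x t + cnt x s - 2) / ((n : ℝ) - 2)
            - ((cnt x t - cnt x s) / ((n : ℝ) - 2)) ^ 2)|
        = |cnt x t * cnt x s| * |(cnt x t + cnt x s - 2) / ((n : ℝ) - 2)
            - ((cnt x t - cnt x s) / ((n : ℝ) - 2)) ^ 2| := abs_mul _ _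
      _ ≤ (n : ℝ) ^ 2 * 5 := by
          refine mul_le_mul h1 ?_ (abs_nonneg _) (by positivity)
          calc |(cnt x t + cnt x s - 2) / ((n : ℝ) - 2)
                - ((cnt x t - cnt x s) / ((n : ℝ) - 2)) ^ 2|
              ≤ |(cnt x t + cnt x s - 2) / ((n : ℝ) - 2)|
                + |((cnt x t - cnt x s) / ((n : ℝ) - 2)) ^ 2| := abs_sub _ _
            _ ≤ 1 + 4 := add_le_add hb1 hb2
            _ = 5 := by norm_num
      _ = 5 * (n : ℝ) ^ 2 := by ring
  have hC : (0:ℝ) ≤ (1 / 2) * (((n : ℝ) - 2) / ((n : ℝ) * ((n : ℝ) - 1) * ((n : ℝ) - 3))) := by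
    positivity
  have hCn : (1 / 2) * (((n : ℝ) - 2) / ((n : ℝ) * ((n : ℝ) - 1) * ((n : ℝ) - 3)))
      * (5 * (n : ℝ) ^ 2) ≤ 10 := by
    have hD : (0:ℝ) < (n : ℝ) * ((n : ℝ) - 1) * ((n : ℝ) - 3) := by positivity
    have heq : (1 / 2) * (((n : ℝ) - 2) / ((n : ℝ) * ((n : ℝ) - 1) * ((n : ℝ) - 3)))
        * (5 * (n : ℝ) ^ 2)
        = (((n : ℝ) - 2) * (5 * (n : ℝ) ^ 2)) / (2 * ((n : ℝ) * ((n : ℝ) - 1) * ((n : ℝ) - 3))) := by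
      field_simp
    rw [heq, div_le_iff₀ (by positivity)]
    nlinarith
  have hsum : |∑ t : Fin d, ∑ s ∈ Finset.univ.erase t,
      cnt x t * cnt x s * ((cnt x t + cnt x s - 2) / ((n : ℝ) - 2)
        - ((cnt x t - cnt x s) / ((n : ℝ) - 2)) ^ 2)| ≤ (d : ℝ)^2 * (5 * (n:ℝ)^2) := by
    refine le_trans (Finset.abs_sum_le_sum_abs _ _) ?_
    have hinner : ∀ t : Fin d, |∑ s ∈ Finset.univ.erase t,
        cnt x t * cnt x s * ((cnt x t + cnt x s - 2) / ((n : ℝ) - 2)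
          - ((cnt x t - cnt x s) / ((n : ℝ) - 2)) ^ 2)| ≤ (d : ℝ) * (5 * (n:ℝ)^2) := by
      intro t
      refine le_trans (Finset.abs_sum_le_sum_abs _ _) ?_
      refine le_trans (Finset.sum_le_card_nsmul _ _ (5 * (n:ℝ)^2) (hterm t)) ?_
      rw [nsmul_eq_mul]
      have : ((Finset.univ.erase t).card : ℝ) ≤ d := by
        refine le_trans (Nat.cast_le.mpr (Finset.card_le_card (Finset.erase_subset _ _))) ?_
        simp
      nlinarith [hn0]
    refine le_trans (Finset.sum_le_card_nsmul _ _ ((d : ℝ) * (5 * (n:ℝ)^2))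
      (fun t _ => hinner t)) ?_
    rw [nsmul_eq_mul]
    simp only [Finset.card_univ, Fintype.card_fin]
    nlinarith [hn0, Nat.cast_nonneg (α := ℝ) d]
  have : trSigmaHatSq x = (1 / 2) * (((n : ℝ) - 2) / ((n : ℝ) * ((n : ℝ) - 1) * ((n : ℝ) - 3)))
      * ∑ t : Fin d, ∑ s ∈ Finset.univ.erase t,
        cnt x t * cnt x s * ((cnt x t + cnt x s - 2) / ((n : ℝ) - 2)
          - ((cnt x t - cnt x s) / ((n : ℝ) - 2)) ^ 2) := rfl
  rw [this, abs_mul, abs_of_nonneg hC]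
  calc (1 / 2) * (((n : ℝ) - 2) / ((n : ℝ) * ((n : ℝ) - 1) * ((n : ℝ) - 3))) * |_root_.id (∑ t : Fin d, ∑ s ∈ Finset.univ.erase t,
        cnt x t * cnt x s * ((cnt x t + cnt x s - 2) / ((n : ℝ) - 2)
          - ((cnt x t - cnt x s) / ((n : ℝ) - 2)) ^ 2))|
      ≤ (1 / 2) * (((n : ℝ) - 2) / ((n : ℝ) * ((n : ℝ) - 1) * ((n : ℝ) - 3)))
        * ((d : ℝ)^2 * (5 * (n:ℝ)^2)) := by
        exact mul_le_mul_of_nonneg_left hsum hC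
    _ ≤ 10 * (d : ℝ) ^ 2 := by nlinarith [hCn, hC, sq_nonneg (d:ℝ), Nat.cast_nonneg (α := ℝ) d]

lemma empFreq_mem {d n : ℕ} (hn : 4 ≤ n) (x : Fin n → Fin d) (t : Fin d) :
    0 ≤ empFreq x t ∧ empFreq x t ≤ 1 := by
  have h4 : (4 : ℝ) ≤ (n : ℝ) := by exact_mod_cast hn
  have hn0 : (0:ℝ) < n := by linarith
  constructor
  · rw [empFreq_eq]; exact div_nonneg (cnt_nonneg x t) (le_of_lt hn0)
  · rw [empFreq_eq, div_le_one hn0]; exact cnt_le x t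

lemma abs_hatSigma_le {d n : ℕ} (hn : 4 ≤ n) (x : Fin n → Fin d) (t s : Fin d) :
    |hatSigma x t s| ≤ 2 := by
  have h4 : (4 : ℝ) ≤ (n : ℝ) := by exact_mod_cast hn
  have hn1 : (0:ℝ) < (n:ℝ) - 1 := by linarith
  have hcov : covMatrix (empFreq x) t s
      = (if t = s then empFreq x t else 0) - empFreq x t * empFreq x s := by
    simp [covMatrix, Matrix.sub_apply, Matrix.diagonal_apply, Matrix.vecMulVec_apply]
  have hentry : |covMatrix (empFreq x) t s| ≤ 1 := by
    rw [hcov]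
    obtain ⟨ht0, ht1⟩ := empFreq_mem hn x t
    obtain ⟨hs0, hs1⟩ := empFreq_mem hn x s
    by_cases hts : t = s
    · rw [if_pos hts, abs_le]; subst hts; constructor <;> nlinarith
    · rw [if_neg hts, abs_le]; constructor <;> nlinarith
  have hratio : (0:ℝ) ≤ (n : ℝ) / ((n:ℝ) - 1) ∧ (n : ℝ) / ((n:ℝ) - 1) ≤ 2 := by
    constructor
    · positivity
    · rw [div_le_iff₀ hn1]; linarith
  have : hatSigma x t s = ((n : ℝ) / ((n:ℝ) - 1)) * covMatrix (empFreq x) t s := by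
    rw [hatSigma, Matrix.smul_apply, smul_eq_mul]
  rw [this, abs_mul, abs_of_nonneg hratio.1]
  nlinarith [hratio.1, hratio.2, hentry, abs_nonneg (covMatrix (empFreq x) t s)]

lemma abs_traceprod_le {d n₁ n₂ : ℕ} (h₁ : 4 ≤ n₁) (h₂ : 4 ≤ n₂)
    (x₁ : Fin n₁ → Fin d) (x₂ : Fin n₂ → Fin d) :
    |Matrix.trace (hatSigma x₁ * hatSigma x₂)| ≤ 4 * (d : ℝ) ^ 2 := by
  have htr : Matrix.trace (hatSigma x₁ * hatSigma x₂)
      = ∑ t : Fin d, ∑ u : Fin d, hatSigma x₁ t u * hatSigma x₂ u t := by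
    simp [Matrix.trace, Matrix.diag, Matrix.mul_apply]
  rw [htr]
  refine le_trans (Finset.abs_sum_le_sum_abs _ _) ?_
  have hinner : ∀ t : Fin d, |∑ u : Fin d, hatSigma x₁ t u * hatSigma x₂ u t|
      ≤ (d : ℝ) * 4 := by
    intro t
    refine le_trans (Finset.abs_sum_le_sum_abs _ _) ?_
    refine le_trans (Finset.sum_le_card_nsmul _ _ 4 (fun u _ => ?_)) ?_
    · rw [abs_mul]
      have := abs_hatSigma_le h₁ x₁ t u
      have := abs_hatSigma_le h₂ x₂ u t
      nlinarith [abs_nonneg (hatSigma x₁ t u), abs_nonneg (hatSigma x₂ u t)]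
    · rw [nsmul_eq_mul]; simp
  refine le_trans (Finset.sum_le_card_nsmul _ _ ((d : ℝ) * 4) (fun t _ => hinner t)) ?_
  rw [nsmul_eq_mul]
  simp only [Finset.card_univ, Fintype.card_fin]
  nlinarith [Nat.cast_nonneg (α := ℝ) d]

lemma abs_sigmaHat0Sq_le {d n₁ n₂ : ℕ} (h₁ : 4 ≤ n₁) (h₂ : 4 ≤ n₂)
    (x₁ : Fin n₁ → Fin d) (x₂ : Fin n₂ → Fin d) {b : ℝ} (hb : 0 < b)
    (hb₁ : b ≤ n₁) (hb₂ : b ≤ n₂) :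
    |sigmaHat0Sq x₁ x₂| ≤ 96 * (d : ℝ) ^ 2 / b ^ 2 := by
  have h4₁ : (4 : ℝ) ≤ (n₁ : ℝ) := by exact_mod_cast h₁
  have h4₂ : (4 : ℝ) ≤ (n₂ : ℝ) := by exact_mod_cast h₂
  have hc₁ : 0 < ((n₁:ℝ)) * ((n₁:ℝ) - 1) := by nlinarith
  have hc₂ : 0 < ((n₂:ℝ)) * ((n₂:ℝ) - 1) := by nlinarith
  have e1 : |2 / ((n₁ : ℝ) * ((n₁ : ℝ) - 1)) * trSigmaHatSq x₁| ≤ 40 * (d:ℝ)^2 / b^2 := by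
    rw [abs_mul, abs_of_nonneg (by positivity : (0:ℝ) ≤ 2 / ((n₁ : ℝ) * ((n₁ : ℝ) - 1)))]
    have hco : 2 / ((n₁ : ℝ) * ((n₁ : ℝ) - 1)) ≤ 4 / b^2 := by
      rw [div_le_div_iff₀ hc₁ (by positivity)]
      nlinarith
    have ht := abs_trEst_le h₁ x₁
    calc 2 / ((n₁ : ℝ) * ((n₁ : ℝ) - 1)) * |trSigmaHatSq x₁|
        ≤ (4 / b^2) * (10 * (d:ℝ)^2) := by
          refine mul_le_mul hco ht (abs_nonneg _) (by positivity)
      _ = 40 * (d:ℝ)^2 / b^2 := by ring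
  have e2 : |2 / ((n₂ : ℝ) * ((n₂ : ℝ) - 1)) * trSigmaHatSq x₂| ≤ 40 * (d:ℝ)^2 / b^2 := by
    rw [abs_mul, abs_of_nonneg (by positivity : (0:ℝ) ≤ 2 / ((n₂ : ℝ) * ((n₂ : ℝ) - 1)))]
    have hco : 2 / ((n₂ : ℝ) * ((n₂ : ℝ) - 1)) ≤ 4 / b^2 := by
      rw [div_le_div_iff₀ hc₂ (by positivity)]
      nlinarith
    have ht := abs_trEst_le h₂ x₂
    calc 2 / ((n₂ : ℝ) * ((n₂ : ℝ) - 1)) * |trSigmaHatSq x₂|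
        ≤ (4 / b^2) * (10 * (d:ℝ)^2) := by
          refine mul_le_mul hco ht (abs_nonneg _) (by positivity)
      _ = 40 * (d:ℝ)^2 / b^2 := by ring
  have e3 : |4 / ((n₁ : ℝ) * (n₂ : ℝ)) * Matrix.trace (hatSigma x₁ * hatSigma x₂)|
      ≤ 16 * (d:ℝ)^2 / b^2 := by
    rw [abs_mul, abs_of_nonneg (by positivity : (0:ℝ) ≤ 4 / ((n₁ : ℝ) * (n₂ : ℝ)))]
    have hco : 4 / ((n₁ : ℝ) * (n₂ : ℝ)) ≤ 4 / b^2 := by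
      rw [div_le_div_iff₀ (by positivity) (by positivity)]
      nlinarith
    have ht := abs_traceprod_le h₁ h₂ x₁ x₂
    calc 4 / ((n₁ : ℝ) * (n₂ : ℝ)) * |Matrix.trace (hatSigma x₁ * hatSigma x₂)|
        ≤ (4 / b^2) * (4 * (d:ℝ)^2) := by
          refine mul_le_mul hco ht (abs_nonneg _) (by positivity)
      _ = 16 * (d:ℝ)^2 / b^2 := by ring
  rw [sigmaHat0Sq]
  calc |2 / ((n₁ : ℝ) * ((n₁ : ℝ) - 1)) * trSigmaHatSq x₁
        + 2 / ((n₂ : ℝ) * ((n₂ : ℝ) - 1)) * trSigmaHatSq x₂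
        + 4 / ((n₁ : ℝ) * (n₂ : ℝ)) * Matrix.trace (hatSigma x₁ * hatSigma x₂)|
      ≤ |2 / ((n₁ : ℝ) * ((n₁ : ℝ) - 1)) * trSigmaHatSq x₁
        + 2 / ((n₂ : ℝ) * ((n₂ : ℝ) - 1)) * trSigmaHatSq x₂|
        + |4 / ((n₁ : ℝ) * (n₂ : ℝ)) * Matrix.trace (hatSigma x₁ * hatSigma x₂)| := abs_add_le _ _
    _ ≤ (|2 / ((n₁ : ℝ) * ((n₁ : ℝ) - 1)) * trSigmaHatSq x₁|
        + |2 / ((n₂ : ℝ) * ((n₂ : ℝ) - 1)) * trSigmaHatSq x₂|)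
        + |4 / ((n₁ : ℝ) * (n₂ : ℝ)) * Matrix.trace (hatSigma x₁ * hatSigma x₂)| := by
        exact add_le_add (abs_add_le _ _) le_rfl
    _ ≤ (40 * (d:ℝ)^2 / b^2 + 40 * (d:ℝ)^2 / b^2) + 16 * (d:ℝ)^2 / b^2 := by
        exact add_le_add (add_le_add e1 e2) e3
    _ = 96 * (d : ℝ) ^ 2 / b ^ 2 := by ring

lemma quad_nonneg {d : ℕ} (π : Fin d → ℝ) (hπ0 : ∀ j, 0 ≤ π j) (hπ : ∑ j, π j = 1)
    (v : Fin d → ℝ) :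
    (∑ i, π i * v i) ^ 2 ≤ ∑ i, π i * v i ^ 2 := by
  have key := Finset.sum_mul_sq_le_sq_mul_sq Finset.univ
    (fun i => Real.sqrt (π i)) (fun i => Real.sqrt (π i) * v i)
  have h1 : ∀ i : Fin d, Real.sqrt (π i) * (Real.sqrt (π i) * v i) = π i * v i := by
    intro i
    rw [← mul_assoc, Real.mul_self_sqrt (hπ0 i)]
  have h2 : ∀ i : Fin d, Real.sqrt (π i) ^ 2 = π i := fun i => Real.sq_sqrt (hπ0 i)
  have h3 : ∀ i : Fin d, (Real.sqrt (π i) * v i) ^ 2 = π i * v i ^ 2 := by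
    intro i
    rw [mul_pow, h2 i]
  rw [Finset.sum_congr rfl (fun i _ => h1 i), Finset.sum_congr rfl (fun i _ => h2 i),
    Finset.sum_congr rfl (fun i _ => h3 i), hπ, one_mul] at key
  exact key

lemma covQuad {d : ℕ} (π : Fin d → ℝ) (v : Fin d → ℝ) :
    ∑ i, ∑ j, covMatrix π i j * v i * v j =
      (∑ i, π i * v i ^ 2) - (∑ i, π i * v i) ^ 2 := by
  have hentry : ∀ i j : Fin d, covMatrix π i j = (if i = j then π i else 0) - π i * π j := by
    intro i j
    simp [covMatrix, Matrix.sub_apply, Matrix.diagonal_apply, Matrix.vecMulVec_apply]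
  have hin : ∀ i : Fin d, ∑ j, covMatrix π i j * v i * v j
      = π i * v i ^ 2 - (π i * v i) * ∑ j, π j * v j := by
    intro i
    have : ∀ j, covMatrix π i j * v i * v j
        = (if i = j then π i * v i ^ 2 else 0) - (π i * v i) * (π j * v j) := by
      intro j
      rw [hentry i j]
      by_cases hij : i = j
      · subst hij; simp; ring
      · simp [hij]; ring
    rw [Finset.sum_congr rfl (fun j _ => this j), Finset.sum_sub_distrib, ← Finset.mul_sum]
    rw [Finset.sum_ite_eq Finset.univ i (fun j => π i * v i ^ 2)]
    simp
  rw [Finset.sum_congr rfl (fun i _ => hin i), Finset.sum_sub_distrib, ← Finset.sum_mul]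
  ring

lemma covMixture {d : ℕ} (ρ : Fin d → ℝ) (hρ : ∑ j, ρ j = 1) (i j : Fin d) :
    covMatrix ρ i j = ∑ m, ρ m * (((if i = m then (1:ℝ) else 0) - ρ i)
      * ((if j = m then (1:ℝ) else 0) - ρ j)) := by
  have hentry : covMatrix ρ i j = (if i = j then ρ i else 0) - ρ i * ρ j := by
    simp [covMatrix, Matrix.sub_apply, Matrix.diagonal_apply, Matrix.vecMulVec_apply]
  rw [hentry]
  have expand : ∀ m : Fin d, ρ m * (((if i = m then (1:ℝ) else 0) - ρ i)
      * ((if j = m then (1:ℝ) else 0) - ρ j))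
      = (if i = m then (1:ℝ) else 0) * (if j = m then (1:ℝ) else 0) * ρ m
        - ρ i * ((if j = m then (1:ℝ) else 0) * ρ m)
        - ρ j * ((if i = m then (1:ℝ) else 0) * ρ m) + ρ i * ρ j * ρ m := by
    intro m; ring
  rw [Finset.sum_congr rfl (fun m _ => expand m)]
  rw [Finset.sum_add_distrib, Finset.sum_sub_distrib, Finset.sum_sub_distrib,
    ← Finset.mul_sum, ← Finset.mul_sum, ← Finset.mul_sum]
  have s1 : ∑ m, (if i = m then (1:ℝ) else 0) * (if j = m then (1:ℝ) else 0) * ρ m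
      = if i = j then ρ i else 0 := by
    by_cases hij : i = j
    · subst hij
      rw [if_pos rfl]
      rw [Finset.sum_eq_single i]
      · simp
      · intro m _ hmi; rw [if_neg (fun h => hmi h.symm)]; ring
      · intro h; exact absurd (Finset.mem_univ i) h
    · rw [if_neg hij]
      refine Finset.sum_eq_zero fun m _ => ?_
      by_cases him : i = m
      · rw [if_neg (fun h : j = m => hij (him.trans h.symm))]; ring
      · rw [if_neg him]; ring
  have s2 : ∑ m, (if j = m then (1:ℝ) else 0) * ρ m = ρ j := by
    rw [Finset.sum_eq_single j]
    · simp
    · intro m _ hmj; rw [if_neg (fun h => hmj h.symm)]; ring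
    · intro h; exact absurd (Finset.mem_univ j) h
  have s3 : ∑ m, (if i = m then (1:ℝ) else 0) * ρ m = ρ i := by
    rw [Finset.sum_eq_single i]
    · simp
    · intro m _ hmi; rw [if_neg (fun h => hmi h.symm)]; ring
    · intro h; exact absurd (Finset.mem_univ i) h
  rw [s1, s2, s3, hρ]
  ring

lemma trprod_nonneg {d : ℕ} (π ρ : Fin d → ℝ) (hπ0 : ∀ j, 0 ≤ π j) (hπ : ∑ j, π j = 1)
    (hρ0 : ∀ j, 0 ≤ ρ j) (hρ : ∑ j, ρ j = 1) :
    0 ≤ trprod π ρ := by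
  classical
  set v : Fin d → Fin d → ℝ := fun m u => (if u = m then (1:ℝ) else 0) - ρ u with hv
  have htr : trprod π ρ = ∑ i, ∑ j, covMatrix π i j * covMatrix ρ j i := by
    rw [trprod]
    simp [Matrix.trace, Matrix.diag, Matrix.mul_apply]
  have hterm : ∀ i j : Fin d, covMatrix π i j * covMatrix ρ j i
      = ∑ m, ρ m * (covMatrix π i j * v m i * v m j) := by
    intro i j
    rw [covMixture ρ hρ j i, Finset.mul_sum]
    refine Finset.sum_congr rfl fun m _ => ?_
    simp only [hv]
    ring
  rw [htr, Finset.sum_congr rfl (fun i _ => Finset.sum_congr rfl (fun j _ => hterm i j))]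
  rw [Finset.sum_congr rfl (fun i (_ : i ∈ Finset.univ) =>
    Finset.sum_comm (s := Finset.univ) (t := Finset.univ)
      (f := fun j m => ρ m * (covMatrix π i j * v m i * v m j)))]
  rw [Finset.sum_comm (s := Finset.univ) (t := Finset.univ)]
  refine Finset.sum_nonneg fun m _ => ?_
  have hinner : ∑ i, ∑ j, ρ m * (covMatrix π i j * v m i * v m j)
      = ρ m * ∑ i, ∑ j, covMatrix π i j * v m i * v m j := by
    rw [Finset.mul_sum]
    exact Finset.sum_congr rfl fun i _ => by rw [Finset.mul_sum]
  rw [hinner]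
  refine mul_nonneg (hρ0 m) ?_
  rw [covQuad]
  have := quad_nonneg π hπ0 hπ (v m)
  linarith

section Big

variable {d : ℕ} (k : ℕ) (n₁ n₂ : ℕ → ℕ → ℕ) (π₁ π₂ : ℕ → ℕ → Fin d → ℝ)

def wpair (r : Fin k) (p : (Fin (n₁ k r) → Fin d) × (Fin (n₂ k r) → Fin d)) : ℝ :=
  wgt (n₁ k r) (π₁ k r) p.1 * wgt (n₂ k r) (π₂ k r) p.2

def Epr (r : Fin k) (g : (Fin (n₁ k r) → Fin d) × (Fin (n₂ k r) → Fin d) → ℝ) : ℝ :=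
  ∑ p, wpair k n₁ n₂ π₁ π₂ r p * g p

def Wb (ω : (r : Fin k) → (Fin (n₁ k r) → Fin d) × (Fin (n₂ k r) → Fin d)) : ℝ :=
  ∏ r, wpair k n₁ n₂ π₁ π₂ r (ω r)

def EB (f : ((r : Fin k) → (Fin (n₁ k r) → Fin d) × (Fin (n₂ k r) → Fin d)) → ℝ) : ℝ :=
  ∑ ω, Wb k n₁ n₂ π₁ π₂ ω * f ω

lemma Epr_eq_Exx (r : Fin k) (g : (Fin (n₁ k r) → Fin d) × (Fin (n₂ k r) → Fin d) → ℝ) :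
    Epr k n₁ n₂ π₁ π₂ r g
      = Exx (n₁ k r) (n₂ k r) (π₁ k r) (π₂ k r) (fun a b => g (a, b)) := by
  rw [Epr, Exx, Fintype.sum_prod_type]
  exact Finset.sum_congr rfl fun a _ => Finset.sum_congr rfl fun b _ => rfl

lemma Epr_one (r : Fin k) (hπ₁ : ∑ j, π₁ k r j = 1) (hπ₂ : ∑ j, π₂ k r j = 1) :
    Epr k n₁ n₂ π₁ π₂ r (fun _ => (1:ℝ)) = 1 := by
  rw [Epr_eq_Exx]
  have h := Exx_left (n₁ k r) (n₂ k r) (π₁ k r) (π₂ k r) hπ₂ (fun _ => (1:ℝ))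
  rw [h, Ex_one _ hπ₁]

lemma Epr_abs_le (r : Fin k) (hπ₁0 : ∀ j, 0 ≤ π₁ k r j) (hπ₂0 : ∀ j, 0 ≤ π₂ k r j)
    (hπ₁ : ∑ j, π₁ k r j = 1) (hπ₂ : ∑ j, π₂ k r j = 1)
    (g : (Fin (n₁ k r) → Fin d) × (Fin (n₂ k r) → Fin d) → ℝ) {C : ℝ}
    (hg : ∀ p, |g p| ≤ C) :
    |Epr k n₁ n₂ π₁ π₂ r g| ≤ C := by
  have hw : ∀ p : (Fin (n₁ k r) → Fin d) × (Fin (n₂ k r) → Fin d),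
      0 ≤ wpair k n₁ n₂ π₁ π₂ r p := by
    intro p
    exact mul_nonneg (Finset.prod_nonneg fun u _ => hπ₁0 _)
      (Finset.prod_nonneg fun u _ => hπ₂0 _)
  have hmass : ∑ p, wpair k n₁ n₂ π₁ π₂ r p = 1 := by
    have := Epr_one k n₁ n₂ π₁ π₂ r hπ₁ hπ₂
    rw [Epr] at this
    simpa using this
  rw [Epr]
  calc |∑ p, wpair k n₁ n₂ π₁ π₂ r p * g p|
      ≤ ∑ p, |wpair k n₁ n₂ π₁ π₂ r p * g p| := Finset.abs_sum_le_sum_abs _ _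
    _ ≤ ∑ p, wpair k n₁ n₂ π₁ π₂ r p * C := by
        refine Finset.sum_le_sum fun p _ => ?_
        rw [abs_mul, abs_of_nonneg (hw p)]
        exact mul_le_mul_of_nonneg_left (hg p) (hw p)
    _ = C := by rw [← Finset.sum_mul, hmass, one_mul]

lemma Epr_sub_const (r : Fin k) (hπ₁ : ∑ j, π₁ k r j = 1) (hπ₂ : ∑ j, π₂ k r j = 1)
    (g : (Fin (n₁ k r) → Fin d) × (Fin (n₂ k r) → Fin d) → ℝ) (c : ℝ) :
    Epr k n₁ n₂ π₁ π₂ r (fun p => g p - c) = Epr k n₁ n₂ π₁ π₂ r g - c := by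
  have h1 := Epr_one k n₁ n₂ π₁ π₂ r hπ₁ hπ₂
  rw [Epr] at h1 ⊢
  rw [Epr]
  calc ∑ p, wpair k n₁ n₂ π₁ π₂ r p * (g p - c)
      = (∑ p, wpair k n₁ n₂ π₁ π₂ r p * g p)
        - c * ∑ p, wpair k n₁ n₂ π₁ π₂ r p * 1 := by
        rw [Finset.mul_sum, ← Finset.sum_sub_distrib]
        exact Finset.sum_congr rfl fun p _ => by ring
    _ = (∑ p, wpair k n₁ n₂ π₁ π₂ r p * g p) - c := by rw [h1, mul_one]

lemma EB_prod (g : (r : Fin k) → (Fin (n₁ k r) → Fin d) × (Fin (n₂ k r) → Fin d) → ℝ) :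
    EB k n₁ n₂ π₁ π₂ (fun ω => ∏ r, g r (ω r)) = ∏ r, Epr k n₁ n₂ π₁ π₂ r (g r) := by
  rw [EB]
  have h1 : ∀ ω : (r : Fin k) → (Fin (n₁ k r) → Fin d) × (Fin (n₂ k r) → Fin d),
      Wb k n₁ n₂ π₁ π₂ ω * ∏ r, g r (ω r)
      = ∏ r, (wpair k n₁ n₂ π₁ π₂ r (ω r) * g r (ω r)) := by
    intro ω
    rw [Wb, ← Finset.prod_mul_distrib]
  rw [Finset.sum_congr rfl fun ω _ => h1 ω]
  simp only [Epr]
  rw [Fintype.prod_sum]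

lemma EB_single (hmass : ∀ u : Fin k, Epr k n₁ n₂ π₁ π₂ u (fun _ => (1:ℝ)) = 1) (r : Fin k)
    (h : (Fin (n₁ k r) → Fin d) × (Fin (n₂ k r) → Fin d) → ℝ) :
    EB k n₁ n₂ π₁ π₂ (fun ω => h (ω r)) = Epr k n₁ n₂ π₁ π₂ r h := by
  classical
  set g : (u : Fin k) → (Fin (n₁ k u) → Fin d) × (Fin (n₂ k u) → Fin d) → ℝ :=
    Function.update (fun u _ => (1:ℝ)) r h with hg
  have h1 : ∀ ω : (u : Fin k) → (Fin (n₁ k u) → Fin d) × (Fin (n₂ k u) → Fin d),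
      h (ω r) = ∏ u, g u (ω u) := by
    intro ω
    rw [prod_single_support r (fun u => g u (ω u)) (fun u hu => by
      simp only [hg, Function.update_of_ne hu])]
    simp only [hg, Function.update_self]
  rw [show (fun ω : (u : Fin k) → (Fin (n₁ k u) → Fin d) × (Fin (n₂ k u) → Fin d) => h (ω r))
    = fun ω => ∏ u, g u (ω u) from funext h1]
  rw [EB_prod]
  rw [prod_single_support r (fun u => Epr k n₁ n₂ π₁ π₂ u (g u)) (fun u hu => by
    have hgu : g u = fun _ => (1:ℝ) := by simp only [hg]; rw [Function.update_of_ne hu]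
    show Epr k n₁ n₂ π₁ π₂ u (g u) = 1
    rw [hgu]
    exact hmass u)]
  simp only [hg, Function.update_self]

lemma EB_pair (hmass : ∀ u : Fin k, Epr k n₁ n₂ π₁ π₂ u (fun _ => (1:ℝ)) = 1)
    {r r' : Fin k} (hne : r ≠ r')
    (h : (Fin (n₁ k r) → Fin d) × (Fin (n₂ k r) → Fin d) → ℝ)
    (h' : (Fin (n₁ k r') → Fin d) × (Fin (n₂ k r') → Fin d) → ℝ) :
    EB k n₁ n₂ π₁ π₂ (fun ω => h (ω r) * h' (ω r'))
      = Epr k n₁ n₂ π₁ π₂ r h * Epr k n₁ n₂ π₁ π₂ r' h' := by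
  classical
  set g : (u : Fin k) → (Fin (n₁ k u) → Fin d) × (Fin (n₂ k u) → Fin d) → ℝ :=
    Function.update (Function.update (fun u _ => (1:ℝ)) r h) r' h' with hg
  have hgr : g r = h := by
    simp only [hg]
    rw [Function.update_of_ne hne, Function.update_self]
  have hgr' : g r' = h' := by simp only [hg]; rw [Function.update_self]
  have h1 : ∀ ω : (u : Fin k) → (Fin (n₁ k u) → Fin d) × (Fin (n₂ k u) → Fin d),
      h (ω r) * h' (ω r') = ∏ u, g u (ω u) := by
    intro ω
    rw [prod_pair_support hne (fun u => g u (ω u)) (fun u hur hur' => by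
      simp only [hg, Function.update_of_ne hur, Function.update_of_ne hur'])]
    rw [hgr, hgr']
  rw [show (fun ω : (u : Fin k) → (Fin (n₁ k u) → Fin d) × (Fin (n₂ k u) → Fin d)
      => h (ω r) * h' (ω r')) = fun ω => ∏ u, g u (ω u) from funext h1]
  rw [EB_prod]
  rw [prod_pair_support hne (fun u => Epr k n₁ n₂ π₁ π₂ u (g u)) (fun u hur hur' => by
    have hgu : g u = fun _ => (1:ℝ) := by
      simp only [hg]
      rw [Function.update_of_ne hur', Function.update_of_ne hur]
    show Epr k n₁ n₂ π₁ π₂ u (g u) = 1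
    rw [hgu]
    exact hmass u)]
  rw [hgr, hgr']

lemma EB_sum {ι : Type*} (F : Finset ι)
    (h : ι → ((r : Fin k) → (Fin (n₁ k r) → Fin d) × (Fin (n₂ k r) → Fin d)) → ℝ) :
    EB k n₁ n₂ π₁ π₂ (fun ω => ∑ i ∈ F, h i ω) = ∑ i ∈ F, EB k n₁ n₂ π₁ π₂ (h i) := by
  simp only [EB, Finset.mul_sum]
  rw [Finset.sum_comm]

lemma EB_const_mul (c : ℝ)
    (f : ((r : Fin k) → (Fin (n₁ k r) → Fin d) × (Fin (n₂ k r) → Fin d)) → ℝ) :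
    EB k n₁ n₂ π₁ π₂ (fun ω => c * f ω) = c * EB k n₁ n₂ π₁ π₂ f := by
  simp only [EB, Finset.mul_sum]
  exact Finset.sum_congr rfl fun ω _ => by ring

end Big

section Meas

lemma catMeasure_singleton {d : ℕ} (π : Fin d → ℝ) (j : Fin d) :
    catMeasure π {j} = ENNReal.ofReal (π j) := by
  rw [catMeasure, MeasureTheory.Measure.finset_sum_apply]
  have : ∀ i : Fin d, (ENNReal.ofReal (π i) • MeasureTheory.Measure.dirac i) {j}
      = ENNReal.ofReal (π i) * (if i = j then 1 else 0) := by
    intro i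
    rw [MeasureTheory.Measure.smul_apply, smul_eq_mul,
      MeasureTheory.Measure.dirac_apply' _ (measurableSet_singleton j)]
    congr 1
    by_cases hij : i = j
    · subst hij; simp
    · simp [Set.indicator, hij]
  rw [Finset.sum_congr rfl fun i _ => this i]
  rw [Finset.sum_eq_single j]
  · simp
  · intro i _ hij; rw [if_neg hij, mul_zero]
  · intro h; exact absurd (Finset.mem_univ j) h

instance catMeasure_finite {d : ℕ} (π : Fin d → ℝ) :
    MeasureTheory.IsFiniteMeasure (catMeasure π) := by
  constructor
  rw [catMeasure, MeasureTheory.Measure.finset_sum_apply]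
  refine ENNReal.sum_lt_top.mpr fun j _ => ?_
  rw [MeasureTheory.Measure.smul_apply, smul_eq_mul]
  exact ENNReal.mul_lt_top ENNReal.ofReal_lt_top
    (by rw [MeasureTheory.Measure.dirac_apply' _ MeasurableSet.univ]; simp)

instance iidMeasure_finite {d n : ℕ} (π : Fin d → ℝ) :
    MeasureTheory.IsFiniteMeasure (iidMeasure n π) := by
  unfold iidMeasure; infer_instance

lemma iidMeasure_singleton {d n : ℕ} (π : Fin d → ℝ) (hπ0 : ∀ j, 0 ≤ π j)
    (x : Fin n → Fin d) :
    iidMeasure n π {x} = ENNReal.ofReal (wgt n π x) := by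
  rw [iidMeasure, ← Set.univ_pi_singleton x, MeasureTheory.Measure.pi_pi]
  rw [Finset.prod_congr rfl fun u _ => catMeasure_singleton π (x u)]
  rw [wgt, ← ENNReal.ofReal_prod_of_nonneg (fun u _ => hπ0 (x u))]

lemma pairMeasure_singleton {d n₁ n₂ : ℕ} (π₁ π₂ : Fin d → ℝ)
    (hπ₁0 : ∀ j, 0 ≤ π₁ j) (hπ₂0 : ∀ j, 0 ≤ π₂ j)
    (p : (Fin n₁ → Fin d) × (Fin n₂ → Fin d)) :
    (iidMeasure n₁ π₁).prod (iidMeasure n₂ π₂) {p}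
      = ENNReal.ofReal (wgt n₁ π₁ p.1 * wgt n₂ π₂ p.2) := by
  rw [← Set.singleton_prod_singleton, MeasureTheory.Measure.prod_prod,
    iidMeasure_singleton π₁ hπ₁0, iidMeasure_singleton π₂ hπ₂0]
  exact (ENNReal.ofReal_mul (Finset.prod_nonneg fun u _ => hπ₁0 _)).symm

lemma bigMeasure_singleton {d k : ℕ} (n₁ n₂ : ℕ → ℕ → ℕ) (π₁ π₂ : ℕ → ℕ → Fin d → ℝ)
    (hπ₁0 : ∀ r : Fin k, ∀ j, 0 ≤ π₁ k r j) (hπ₂0 : ∀ r : Fin k, ∀ j, 0 ≤ π₂ k r j)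
    (ω : (r : Fin k) → (Fin (n₁ k r) → Fin d) × (Fin (n₂ k r) → Fin d)) :
    bigMeasure d k n₁ n₂ π₁ π₂ {ω} = ENNReal.ofReal (Wb k n₁ n₂ π₁ π₂ ω) := by
  rw [bigMeasure, ← Set.univ_pi_singleton ω, MeasureTheory.Measure.pi_pi]
  rw [Finset.prod_congr rfl fun (r : Fin k) _ =>
    pairMeasure_singleton (π₁ k r) (π₂ k r) (hπ₁0 r) (hπ₂0 r) (ω r)]
  rw [Wb, ← ENNReal.ofReal_prod_of_nonneg]
  · rfl
  · intro r _
    exact mul_nonneg (Finset.prod_nonneg fun u _ => hπ₁0 r _)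
      (Finset.prod_nonneg fun u _ => hπ₂0 r _)

lemma bigMeasure_set_le {d k : ℕ} (n₁ n₂ : ℕ → ℕ → ℕ) (π₁ π₂ : ℕ → ℕ → Fin d → ℝ)
    (hπ₁0 : ∀ r : Fin k, ∀ j, 0 ≤ π₁ k r j) (hπ₂0 : ∀ r : Fin k, ∀ j, 0 ≤ π₂ k r j)
    (A : Set ((r : Fin k) → (Fin (n₁ k r) → Fin d) × (Fin (n₂ k r) → Fin d)))
    [DecidablePred fun ω => ω ∈ A] {B : ℝ}
    (hB : ∑ ω ∈ Finset.univ.filter (fun ω => ω ∈ A), Wb k n₁ n₂ π₁ π₂ ω ≤ B) :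
    bigMeasure d k n₁ n₂ π₁ π₂ A ≤ ENNReal.ofReal B := by
  have hWnn : ∀ ω, 0 ≤ Wb k n₁ n₂ π₁ π₂ ω := by
    intro ω
    exact Finset.prod_nonneg fun r _ =>
      mul_nonneg (Finset.prod_nonneg fun u _ => hπ₁0 r _)
        (Finset.prod_nonneg fun u _ => hπ₂0 r _)
  have hsub : A ⊆ ⋃ ω ∈ Finset.univ.filter (fun ω => ω ∈ A), {ω} := by
    intro ω hω
    simp only [Set.mem_iUnion, Finset.mem_filter, Finset.mem_univ, true_and]
    exact ⟨ω, hω, rfl⟩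
  calc bigMeasure d k n₁ n₂ π₁ π₂ A
      ≤ bigMeasure d k n₁ n₂ π₁ π₂ (⋃ ω ∈ Finset.univ.filter (fun ω => ω ∈ A), {ω}) :=
        measure_mono hsub
    _ ≤ ∑ ω ∈ Finset.univ.filter (fun ω => ω ∈ A), bigMeasure d k n₁ n₂ π₁ π₂ {ω} :=
        measure_biUnion_finset_le _ _
    _ = ∑ ω ∈ Finset.univ.filter (fun ω => ω ∈ A),
          ENNReal.ofReal (Wb k n₁ n₂ π₁ π₂ ω) := by
        exact Finset.sum_congr rfl fun ω _ =>
          bigMeasure_singleton n₁ n₂ π₁ π₂ hπ₁0 hπ₂0 ω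
    _ = ENNReal.ofReal (∑ ω ∈ Finset.univ.filter (fun ω => ω ∈ A),
          Wb k n₁ n₂ π₁ π₂ ω) :=
        (ENNReal.ofReal_sum_of_nonneg fun ω _ => hWnn ω).symm
    _ ≤ ENNReal.ofReal B := ENNReal.ofReal_le_ofReal hB

end Meas

set_option maxHeartbeats 2000000 in
lemma main_bound {d : ℕ} (c₀ C₀ δ : ℝ)
    (hc₀ : 0 < c₀) (hcC : c₀ ≤ C₀) (hδ : 0 < δ)
    (π₁ π₂ : ℕ → ℕ → Fin d → ℝ) (n₁ n₂ : ℕ → ℕ → ℕ) (k : ℕ) (hk : 1 ≤ k)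
    (hΞ₁ : ∀ r : Fin k, (∀ j, 0 ≤ π₁ k r j) ∧ ∑ j, π₁ k r j = 1)
    (hΞ₂ : ∀ r : Fin k, (∀ j, 0 ≤ π₂ k r j) ∧ ∑ j, π₂ k r j = 1)
    (hn : ∀ r : Fin k, 4 ≤ n₁ k r ∧ 4 ≤ n₂ k r)
    (m : ℕ) (hm : 0 < m) (c₁ c₂ : ℕ → ℕ → ℝ)
    (hc : ∀ r : Fin k,
      (n₁ k r : ℝ) = c₁ k r * m ∧ (n₂ k r : ℝ) = c₂ k r * m
        ∧ c₀ ≤ c₁ k r ∧ c₁ k r ≤ C₀ ∧ c₀ ≤ c₂ k r ∧ c₂ k r ≤ C₀)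
    (htr : ∀ r : Fin k, δ < trsq (π₁ k r) ∧ δ < trsq (π₂ k r))
    (ε : ℝ) (hε : 0 < ε) :
    bigMeasure d k n₁ n₂ π₁ π₂
        {ω | ε ≤ |varHat0 d k n₁ n₂ ω / var0gen d k n₁ n₂ π₁ π₂ - 1|}
      ≤ ENNReal.ofReal ((4 * (96 * (d:ℝ)^2 / c₀^2)^2 / (4 * δ / C₀^2)^2) / (ε^2 * k)) := by
  classical
  set K : ℝ := 96 * (d:ℝ)^2 / c₀^2 with hK
  set cl : ℝ := 4 * δ / C₀^2 with hcl
  have hC₀ : 0 < C₀ := lt_of_lt_of_le hc₀ hcC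
  have hclpos : 0 < cl := by rw [hcl]; positivity
  have hKnn : 0 ≤ K := by rw [hK]; positivity
  have hmR : (1:ℝ) ≤ (m:ℝ) := by exact_mod_cast hm
  have hmR0 : (0:ℝ) < (m:ℝ) := by linarith
  have hkR : (1:ℝ) ≤ (k:ℝ) := by exact_mod_cast hk
  have hkR0 : (0:ℝ) < (k:ℝ) := by linarith
  -- the random variables
  set X : (r : Fin k) → ((Fin (n₁ k r) → Fin d) × (Fin (n₂ k r) → Fin d)) → ℝ :=
    fun r p => sigmaHat0Sq p.1 p.2 with hX
  set μr : Fin k → ℝ := fun r =>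
    2 / ((n₁ k r : ℝ) * ((n₁ k r : ℝ) - 1)) * trsq (π₁ k r)
      + 2 / ((n₂ k r : ℝ) * ((n₂ k r : ℝ) - 1)) * trsq (π₂ k r)
      + 4 / ((n₁ k r : ℝ) * (n₂ k r : ℝ)) * trprod (π₁ k r) (π₂ k r) with hμr
  set μ : ℝ := var0gen d k n₁ n₂ π₁ π₂ with hμ
  -- sample size bounds
  have hn₁low : ∀ r : Fin k, c₀ * (m:ℝ) ≤ (n₁ k r : ℝ) := by
    intro r
    obtain ⟨h1, _, h3, _, _, _⟩ := hc r
    rw [h1]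
    exact mul_le_mul_of_nonneg_right h3 (le_of_lt hmR0)
  have hn₂low : ∀ r : Fin k, c₀ * (m:ℝ) ≤ (n₂ k r : ℝ) := by
    intro r
    obtain ⟨_, h2, _, _, h5, _⟩ := hc r
    rw [h2]
    exact mul_le_mul_of_nonneg_right h5 (le_of_lt hmR0)
  have hn₁up : ∀ r : Fin k, (n₁ k r : ℝ) ≤ C₀ * (m:ℝ) := by
    intro r
    obtain ⟨h1, _, _, h4, _, _⟩ := hc r
    rw [h1]
    exact mul_le_mul_of_nonneg_right h4 (le_of_lt hmR0)
  have hn₂up : ∀ r : Fin k, (n₂ k r : ℝ) ≤ C₀ * (m:ℝ) := by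
    intro r
    obtain ⟨_, h2, _, _, _, h6⟩ := hc r
    rw [h2]
    exact mul_le_mul_of_nonneg_right h6 (le_of_lt hmR0)
  -- pointwise bound on X
  have hXb : ∀ (r : Fin k) p, |X r p| ≤ K / (m:ℝ)^2 := by
    intro r p
    have hb : (0:ℝ) < c₀ * (m:ℝ) := by positivity
    have h := abs_sigmaHat0Sq_le (hn r).1 (hn r).2 p.1 p.2 hb (hn₁low r) (hn₂low r)
    have heq : 96 * (d:ℝ)^2 / (c₀ * (m:ℝ))^2 = K / (m:ℝ)^2 := by
      rw [hK, mul_pow, div_div]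
    rw [heq] at h
    exact h
  -- exact means
  have hmean : ∀ r : Fin k, Epr k n₁ n₂ π₁ π₂ r (X r) = μr r := by
    intro r
    rw [Epr_eq_Exx]
    exact mean_sigmaHat0Sq (hn r).1 (hn r).2 _ _ (hΞ₁ r).2 (hΞ₂ r).2
  have hmass : ∀ u : Fin k, Epr k n₁ n₂ π₁ π₂ u (fun _ => (1:ℝ)) = 1 := fun u =>
    Epr_one k n₁ n₂ π₁ π₂ u (hΞ₁ u).2 (hΞ₂ u).2
  have hμrb : ∀ r : Fin k, |μr r| ≤ K / (m:ℝ)^2 := by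
    intro r
    rw [← hmean r]
    exact Epr_abs_le k n₁ n₂ π₁ π₂ r (hΞ₁ r).1 (hΞ₂ r).1 (hΞ₁ r).2 (hΞ₂ r).2 (X r) (hXb r)
  -- lower bound on the means
  have hμrlow : ∀ r : Fin k, cl / (m:ℝ)^2 ≤ μr r := by
    intro r
    have h4₁ : (4:ℝ) ≤ (n₁ k r : ℝ) := by exact_mod_cast (hn r).1
    have h4₂ : (4:ℝ) ≤ (n₂ k r : ℝ) := by exact_mod_cast (hn r).2
    have hup₁ := hn₁up r
    have hup₂ := hn₂up r
    have hpos₁ : (0:ℝ) < (n₁ k r : ℝ) * ((n₁ k r : ℝ) - 1) := by nlinarith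
    have hpos₂ : (0:ℝ) < (n₂ k r : ℝ) * ((n₂ k r : ℝ) - 1) := by nlinarith
    have hco₁ : 2 / (C₀ * (m:ℝ))^2 ≤ 2 / ((n₁ k r : ℝ) * ((n₁ k r : ℝ) - 1)) := by
      rw [div_le_div_iff₀ (by positivity) hpos₁]
      nlinarith
    have hco₂ : 2 / (C₀ * (m:ℝ))^2 ≤ 2 / ((n₂ k r : ℝ) * ((n₂ k r : ℝ) - 1)) := by
      rw [div_le_div_iff₀ (by positivity) hpos₂]
      nlinarith
    have htpos : 0 ≤ 4 / ((n₁ k r : ℝ) * (n₂ k r : ℝ)) * trprod (π₁ k r) (π₂ k r) := by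
      refine mul_nonneg (by positivity) ?_
      exact trprod_nonneg _ _ (hΞ₁ r).1 (hΞ₁ r).2 (hΞ₂ r).1 (hΞ₂ r).2
    have ht₁ : 2 / (C₀ * (m:ℝ))^2 * δ
        ≤ 2 / ((n₁ k r : ℝ) * ((n₁ k r : ℝ) - 1)) * trsq (π₁ k r) := by
      have := (htr r).1
      have hcopos : (0:ℝ) ≤ 2 / (C₀ * (m:ℝ))^2 := by positivity
      nlinarith [hco₁]
    have ht₂ : 2 / (C₀ * (m:ℝ))^2 * δ
        ≤ 2 / ((n₂ k r : ℝ) * ((n₂ k r : ℝ) - 1)) * trsq (π₂ k r) := by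
      have := (htr r).2
      have hcopos : (0:ℝ) ≤ 2 / (C₀ * (m:ℝ))^2 := by positivity
      nlinarith [hco₂]
    have hsum : 2 / (C₀ * (m:ℝ))^2 * δ + 2 / (C₀ * (m:ℝ))^2 * δ ≤ μr r := by
      rw [hμr]
      have := add_le_add (add_le_add ht₁ ht₂) htpos
      simpa using this
    have heq : 2 / (C₀ * (m:ℝ))^2 * δ + 2 / (C₀ * (m:ℝ))^2 * δ = cl / (m:ℝ)^2 := by
      rw [hcl, mul_pow]
      ring
    linarith [hsum, heq ▸ hsum]
  -- lower bound on μ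
  have hμlow : cl / (m:ℝ)^2 ≤ μ := by
    rw [hμ, var0gen]
    have : (k:ℝ) * (cl / (m:ℝ)^2) ≤ ∑ r : Fin k, μr r := by
      calc (k:ℝ) * (cl / (m:ℝ)^2) = ∑ _r : Fin k, cl / (m:ℝ)^2 := by
            rw [Finset.sum_const, Finset.card_univ, Fintype.card_fin, nsmul_eq_mul]
        _ ≤ ∑ r : Fin k, μr r := Finset.sum_le_sum fun r _ => hμrlow r
    calc cl / (m:ℝ)^2 = 1 / (k:ℝ) * ((k:ℝ) * (cl / (m:ℝ)^2)) := by field_simp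
      _ ≤ 1 / (k:ℝ) * ∑ r : Fin k, μr r := by
          exact mul_le_mul_of_nonneg_left this (by positivity)
  have hμpos : 0 < μ := lt_of_lt_of_le (by positivity) hμlow
  -- centered variables
  set Y : (r : Fin k) → ((Fin (n₁ k r) → Fin d) × (Fin (n₂ k r) → Fin d)) → ℝ :=
    fun r p => X r p - μr r with hY
  have hY0 : ∀ r : Fin k, Epr k n₁ n₂ π₁ π₂ r (Y r) = 0 := by
    intro r
    rw [hY]
    have := Epr_sub_const k n₁ n₂ π₁ π₂ r (hΞ₁ r).2 (hΞ₂ r).2 (X r) (μr r)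
    rw [this, hmean r, sub_self]
  have hYb : ∀ (r : Fin k) p, |Y r p| ≤ 2 * K / (m:ℝ)^2 := by
    intro r p
    rw [hY]
    calc |X r p - μr r| ≤ |X r p| + |μr r| := abs_sub _ _
      _ ≤ K / (m:ℝ)^2 + K / (m:ℝ)^2 := add_le_add (hXb r p) (hμrb r)
      _ = 2 * K / (m:ℝ)^2 := by ring
  -- variance bound
  have hvar : EB k n₁ n₂ π₁ π₂ (fun ω => (varHat0 d k n₁ n₂ ω - μ)^2)
      ≤ 4 * K^2 / ((k:ℝ) * (m:ℝ)^4) := by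
    have hdiff : ∀ ω, varHat0 d k n₁ n₂ ω - μ = (1/(k:ℝ)) * ∑ r, Y r (ω r) := by
      intro ω
      rw [varHat0, hμ, var0gen, hY]
      rw [show (∑ r : Fin k, (X r (ω r) - μr r))
        = (∑ r : Fin k, X r (ω r)) - ∑ r : Fin k, μr r from Finset.sum_sub_distrib _ _]
      try rw [mul_sub]
      try rfl
    have hsq_fun : (fun ω => (varHat0 d k n₁ n₂ ω - μ)^2)
        = fun ω => (1/(k:ℝ))^2 * ∑ r : Fin k, ∑ r' : Fin k, Y r (ω r) * Y r' (ω r') := by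
      funext ω
      rw [hdiff ω, mul_pow, sq (∑ r : Fin k, Y r (ω r)), Finset.sum_mul_sum]
    rw [hsq_fun, EB_const_mul, EB_sum]
    have hper : ∀ r : Fin k,
        EB k n₁ n₂ π₁ π₂ (fun ω => ∑ r' : Fin k, Y r (ω r) * Y r' (ω r'))
          = ∑ r' : Fin k, EB k n₁ n₂ π₁ π₂ (fun ω => Y r (ω r) * Y r' (ω r')) :=
      fun r => EB_sum k n₁ n₂ π₁ π₂ Finset.univ _
    rw [Finset.sum_congr rfl fun r _ => hper r]
    have hinner : ∀ r : Fin k,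
        ∑ r' : Fin k, EB k n₁ n₂ π₁ π₂ (fun ω => Y r (ω r) * Y r' (ω r'))
          ≤ (2 * K / (m:ℝ)^2)^2 := by
      intro r
      rw [← Finset.add_sum_erase Finset.univ _ (Finset.mem_univ r)]
      have hzero : ∀ r' ∈ Finset.univ.erase r,
          EB k n₁ n₂ π₁ π₂ (fun ω => Y r (ω r) * Y r' (ω r')) = 0 := by
        intro r' hr'
        have hne : r ≠ r' := (Finset.ne_of_mem_erase hr').symm
        rw [EB_pair k n₁ n₂ π₁ π₂ hmass hne (Y r) (Y r'), hY0 r, zero_mul]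
      rw [Finset.sum_eq_zero hzero, add_zero]
      have hsingle : EB k n₁ n₂ π₁ π₂ (fun ω => Y r (ω r) * Y r (ω r))
          = Epr k n₁ n₂ π₁ π₂ r (fun p => Y r p * Y r p) :=
        EB_single k n₁ n₂ π₁ π₂ hmass r (fun p => Y r p * Y r p)
      rw [hsingle]
      have hb : ∀ p, |Y r p * Y r p| ≤ (2 * K / (m:ℝ)^2)^2 := by
        intro p
        rw [abs_mul, sq]
        exact mul_le_mul (hYb r p) (hYb r p) (abs_nonneg _) (by positivity)
      exact le_trans (le_abs_self _)
        (Epr_abs_le k n₁ n₂ π₁ π₂ r (hΞ₁ r).1 (hΞ₂ r).1 (hΞ₁ r).2 (hΞ₂ r).2 _ hb)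
    calc (1/(k:ℝ))^2 * ∑ r : Fin k,
          ∑ r' : Fin k, EB k n₁ n₂ π₁ π₂ (fun ω => Y r (ω r) * Y r' (ω r'))
        ≤ (1/(k:ℝ))^2 * ((k:ℝ) * (2 * K / (m:ℝ)^2)^2) := by
          refine mul_le_mul_of_nonneg_left ?_ (by positivity)
          calc ∑ r : Fin k, ∑ r' : Fin k,
                EB k n₁ n₂ π₁ π₂ (fun ω => Y r (ω r) * Y r' (ω r'))
              ≤ ∑ _r : Fin k, (2 * K / (m:ℝ)^2)^2 :=
                Finset.sum_le_sum fun r _ => hinner r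
            _ = (k:ℝ) * (2 * K / (m:ℝ)^2)^2 := by
                rw [Finset.sum_const, Finset.card_univ, Fintype.card_fin, nsmul_eq_mul]
      _ = 4 * K^2 / ((k:ℝ) * (m:ℝ)^4) := by
          field_simp
          ring
  -- Chebyshev
  set q : ℝ := ε^2 * (cl / (m:ℝ)^2)^2 with hq
  have hqpos : 0 < q := by rw [hq]; positivity
  have hWnn : ∀ ω, 0 ≤ Wb k n₁ n₂ π₁ π₂ ω := by
    intro ω
    exact Finset.prod_nonneg fun r _ =>
      mul_nonneg (Finset.prod_nonneg fun u _ => (hΞ₁ r).1 _)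
        (Finset.prod_nonneg fun u _ => (hΞ₂ r).1 _)
  set A : Set ((r : Fin k) → (Fin (n₁ k r) → Fin d) × (Fin (n₂ k r) → Fin d)) :=
    {ω | ε ≤ |varHat0 d k n₁ n₂ ω / var0gen d k n₁ n₂ π₁ π₂ - 1|} with hA
  have hAq : ∀ ω ∈ A, q ≤ (varHat0 d k n₁ n₂ ω - μ)^2 := by
    intro ω hω
    rw [hA] at hω
    simp only [Set.mem_setOf_eq] at hω
    have hrewrite : varHat0 d k n₁ n₂ ω / var0gen d k n₁ n₂ π₁ π₂ - 1
        = (varHat0 d k n₁ n₂ ω - μ) / μ := by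
      rw [hμ]
      have hne : var0gen d k n₁ n₂ π₁ π₂ ≠ 0 := by rw [← hμ]; exact hμpos.ne'
      rw [sub_div, div_self hne]
    rw [hrewrite, abs_div, abs_of_pos hμpos, le_div_iff₀ hμpos] at hω
    have h1 : ε * (cl / (m:ℝ)^2) ≤ ε * μ := by
      exact mul_le_mul_of_nonneg_left hμlow (le_of_lt hε)
    have h2 : ε * (cl / (m:ℝ)^2) ≤ |varHat0 d k n₁ n₂ ω - μ| := le_trans h1 hω
    have h3 : (ε * (cl / (m:ℝ)^2))^2 ≤ |varHat0 d k n₁ n₂ ω - μ|^2 := by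
      exact pow_le_pow_left₀ (by positivity) h2 2
    rw [sq_abs] at h3
    calc q = (ε * (cl / (m:ℝ)^2))^2 := by rw [hq]; ring
      _ ≤ _ := h3
  have hcheb : ∑ ω ∈ Finset.univ.filter (fun ω => ω ∈ A), Wb k n₁ n₂ π₁ π₂ ω
      ≤ (4 * K^2 / cl^2) / (ε^2 * (k:ℝ)) := by
    have step1 : ∑ ω ∈ Finset.univ.filter (fun ω => ω ∈ A), Wb k n₁ n₂ π₁ π₂ ω
        ≤ ∑ ω ∈ Finset.univ.filter (fun ω => ω ∈ A),
            Wb k n₁ n₂ π₁ π₂ ω * ((varHat0 d k n₁ n₂ ω - μ)^2 / q) := by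
      refine Finset.sum_le_sum fun ω hω => ?_
      have hωA : ω ∈ A := (Finset.mem_filter.mp hω).2
      refine le_mul_of_one_le_right (hWnn ω) ?_
      rw [le_div_iff₀ hqpos, one_mul]
      exact hAq ω hωA
    have step2 : ∑ ω ∈ Finset.univ.filter (fun ω => ω ∈ A),
          Wb k n₁ n₂ π₁ π₂ ω * ((varHat0 d k n₁ n₂ ω - μ)^2 / q)
        ≤ ∑ ω, Wb k n₁ n₂ π₁ π₂ ω * ((varHat0 d k n₁ n₂ ω - μ)^2 / q) := by
      refine Finset.sum_le_sum_of_subset_of_nonneg (Finset.filter_subset _ _) ?_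
      intro ω _ _
      refine mul_nonneg (hWnn ω) ?_
      positivity
    have step3 : ∑ ω, Wb k n₁ n₂ π₁ π₂ ω * ((varHat0 d k n₁ n₂ ω - μ)^2 / q)
        = (1/q) * EB k n₁ n₂ π₁ π₂ (fun ω => (varHat0 d k n₁ n₂ ω - μ)^2) := by
      rw [EB, Finset.mul_sum]
      exact Finset.sum_congr rfl fun ω _ => by ring
    have step4 : (1/q) * EB k n₁ n₂ π₁ π₂ (fun ω => (varHat0 d k n₁ n₂ ω - μ)^2)
        ≤ (1/q) * (4 * K^2 / ((k:ℝ) * (m:ℝ)^4)) := by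
      exact mul_le_mul_of_nonneg_left hvar (by positivity)
    have step5 : (1/q) * (4 * K^2 / ((k:ℝ) * (m:ℝ)^4))
        = (4 * K^2 / cl^2) / (ε^2 * (k:ℝ)) := by
      rw [hq]
      field_simp
    calc ∑ ω ∈ Finset.univ.filter (fun ω => ω ∈ A), Wb k n₁ n₂ π₁ π₂ ω
        ≤ ∑ ω ∈ Finset.univ.filter (fun ω => ω ∈ A),
            Wb k n₁ n₂ π₁ π₂ ω * ((varHat0 d k n₁ n₂ ω - μ)^2 / q) := step1
      _ ≤ ∑ ω, Wb k n₁ n₂ π₁ π₂ ω * ((varHat0 d k n₁ n₂ ω - μ)^2 / q) := step2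
      _ = (1/q) * EB k n₁ n₂ π₁ π₂ (fun ω => (varHat0 d k n₁ n₂ ω - μ)^2) := step3
      _ ≤ (1/q) * (4 * K^2 / ((k:ℝ) * (m:ℝ)^4)) := step4
      _ = (4 * K^2 / cl^2) / (ε^2 * (k:ℝ)) := step5
  exact bigMeasure_set_le n₁ n₂ π₁ π₂ (fun r => (hΞ₁ r).1) (fun r => (hΞ₂ r).1) A hcheb

end Stmt14Aux
end

/-- Ratio consistency of the Test 1 variance estimator: `v̂ar₀(T_U)/var₀(T_U) → 1` in
probability as `k → ∞`, under the null and under alternatives. -/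
theorem stmt_14 {d : ℕ} (hd : 2 ≤ d) (c₀ C₀ δ : ℝ)
    (hc₀ : 0 < c₀) (hcC : c₀ ≤ C₀) (hδ : 0 < δ)
    (π₁ π₂ : ℕ → ℕ → Fin d → ℝ) (n₁ n₂ : ℕ → ℕ → ℕ)
    (hΞ₁ : ∀ k : ℕ, ∀ r : Fin k, (∀ j, 0 ≤ π₁ k r j) ∧ ∑ j, π₁ k r j = 1)
    (hΞ₂ : ∀ k : ℕ, ∀ r : Fin k, (∀ j, 0 ≤ π₂ k r j) ∧ ∑ j, π₂ k r j = 1)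
    (hn : ∀ k : ℕ, ∀ r : Fin k, 4 ≤ n₁ k r ∧ 4 ≤ n₂ k r)
    (m : ℕ → ℕ) (hm : ∀ k, 0 < m k)
    (c₁ c₂ : ℕ → ℕ → ℝ)
    (hc : ∀ k : ℕ, ∀ r : Fin k,
      (n₁ k r : ℝ) = c₁ k r * m k ∧ (n₂ k r : ℝ) = c₂ k r * m k
        ∧ c₀ ≤ c₁ k r ∧ c₁ k r ≤ C₀ ∧ c₀ ≤ c₂ k r ∧ c₂ k r ≤ C₀)
    (htr : ∀ k : ℕ, ∀ r : Fin k, δ < trsq (π₁ k r) ∧ δ < trsq (π₂ k r)) :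
    ∀ ε : ℝ, 0 < ε →
      Tendsto
        (fun k => bigMeasure d k n₁ n₂ π₁ π₂
          {ω | ε ≤ |varHat0 d k n₁ n₂ ω / var0gen d k n₁ n₂ π₁ π₂ - 1|})
        atTop (nhds 0) := by
  intro ε hε
  set Cst : ℝ := 4 * (96 * (d:ℝ)^2 / c₀^2)^2 / (4 * δ / C₀^2)^2 with hCst
  have hbound : ∀ k : ℕ, 1 ≤ k →
      bigMeasure d k n₁ n₂ π₁ π₂
          {ω | ε ≤ |varHat0 d k n₁ n₂ ω / var0gen d k n₁ n₂ π₁ π₂ - 1|}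
        ≤ ENNReal.ofReal (Cst / ε^2 / (k:ℝ)) := by
    intro k hk
    have h := Stmt14Aux.main_bound c₀ C₀ δ hc₀ hcC hδ π₁ π₂ n₁ n₂ k hk (hΞ₁ k) (hΞ₂ k)
      (hn k) (m k) (hm k) c₁ c₂ (hc k) (htr k) ε hε
    have heq : Cst / (ε^2 * (k:ℝ)) = Cst / ε^2 / (k:ℝ) := (div_div _ _ _).symm
    rw [hCst]
    rw [← heq]
    exact h
  have hlim : Filter.Tendsto (fun k : ℕ => ENNReal.ofReal (Cst / ε^2 / (k:ℝ)))
      atTop (nhds 0) := by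
    have h1 : Filter.Tendsto (fun k : ℕ => Cst / ε^2 / (k:ℝ)) atTop (nhds 0) :=
      tendsto_const_div_atTop_nhds_zero_nat _
    have h2 := ENNReal.tendsto_ofReal h1
    rwa [ENNReal.ofReal_zero] at h2
  refine tendsto_of_tendsto_of_tendsto_of_le_of_le' tendsto_const_nhds hlim
    (Filter.Eventually.of_forall fun k => zero_le) ?_
  filter_upwards [Filter.eventually_ge_atTop 1] with k hk
  exact hbound k hk
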